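/- arXiv:math/0409131 — 8 statements merged into one kernel-verified Lean document; each statement's English description precedes it below -/
import Mathlib

section
/- Let M ⊂ ℂ^N be a bounded connected open set and let f : M → M be holomorphic. If f maps M strictly inside M, i.e. there exists ε > 0 such that the ε-neighbourhood of f(M) is contained in M, then f has a unique fixed point in M. -/
/-!
The Carathéodory–Reiffen pseudometric `γ(x; v) = sup ‖Dg(x) v‖`, the supremum over holomorphic
`g : M → 𝔻`, does not increase under holomorphic self-maps of `M`, and it dominates a multiple of
the norm because `M` is bounded. If `f` maps `M` into `M` with room `ε` to spare, then for small
`τ > 0` the map `z ↦ f z + τ (f z - f x)` still sends `M` into `M`; applied to it, the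
monotonicity improves at `x` to `(1 + τ) γ(f x; Df(x) v) ≤ γ(x; v)`. Integrating `γ` along paths,
`f` becomes a strict contraction of the associated inner distance, which is finite on the connected
set `M` and dominates the norm distance. Hence the orbits of `f` are Cauchy, and their limit is a
fixed point that lies in `M` because it lies in the closure of `f(M)`.
-/

open Metric Set Filter MeasureTheory Topology
open scoped ENNReal

theorem exists_unique_fixedPoint_of_contracting {α : Type*} [EMetricSpace α] [CompleteSpace α]
    {M : Set α} {f : α → α} (d : α → α → ℝ≥0∞) {k C : ℝ≥0∞} (hk : k < 1) (hC : C ≠ ⊤)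
    (hne : M.Nonempty) (hcont : ContinuousOn f M) (hclosure : closure (f '' M) ⊆ M)
    (hfin : ∀ a ∈ M, ∀ b ∈ M, d a b ≠ ⊤) (hedist : ∀ a ∈ M, ∀ b ∈ M, edist a b ≤ C * d a b)
    (hcontr : ∀ a ∈ M, ∀ b ∈ M, d (f a) (f b) ≤ k * d a b) :
    ∃! x, x ∈ M ∧ f x = x := by
  have hmaps : MapsTo f M M := fun x hx => hclosure (subset_closure (mem_image_of_mem f hx))
  obtain ⟨x₀, hx₀⟩ := hne
  set u : ℕ → α := fun n => f^[n] x₀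
  have hu : ∀ n, u n ∈ M := fun n => hmaps.iterate n hx₀
  have hsucc : ∀ n, u (n + 1) = f (u n) := fun n => Function.iterate_succ_apply' f n x₀
  have hstep : ∀ n, d (u n) (u (n + 1)) ≤ k ^ n * d (u 0) (u 1) := by
    intro n
    induction n with
    | zero => simp
    | succ n ih =>
      calc d (u (n + 1)) (u (n + 1 + 1)) = d (f (u n)) (f (u (n + 1))) := by
            rw [hsucc (n + 1), hsucc n]
        _ ≤ k * d (u n) (u (n + 1)) := hcontr _ (hu n) _ (hu (n + 1))
        _ ≤ k * (k ^ n * d (u 0) (u 1)) := by gcongr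
        _ = k ^ (n + 1) * d (u 0) (u 1) := by ring
  have hcauchy : CauchySeq u := by
    refine cauchySeq_of_edist_le_geometric k (C * d (u 0) (u 1)) hk
      (ENNReal.mul_ne_top hC (hfin _ (hu 0) _ (hu 1))) fun n => ?_
    calc edist (u n) (u (n + 1)) ≤ C * d (u n) (u (n + 1)) := hedist _ (hu n) _ (hu (n + 1))
      _ ≤ C * (k ^ n * d (u 0) (u 1)) := by gcongr; exact hstep n
      _ = C * d (u 0) (u 1) * k ^ n := by ring
  obtain ⟨x, hlim⟩ := cauchySeq_tendsto_of_complete hcauchy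
  have hlim' : Tendsto (fun n => f (u n)) atTop (𝓝 x) := by
    simpa only [Function.comp_def, hsucc] using hlim.comp (tendsto_add_atTop_nat 1)
  have hx : x ∈ M :=
    hclosure <| mem_closure_of_tendsto hlim' <|
      Eventually.of_forall fun n => mem_image_of_mem f (hu n)
  have hfix : f x = x := by
    refine tendsto_nhds_unique ?_ hlim'
    exact (hcont x hx).tendsto.comp (tendsto_nhdsWithin_iff.2 ⟨hlim, Eventually.of_forall hu⟩)
  refine ⟨x, ⟨hx, hfix⟩, fun y ⟨hy, hfy⟩ => ?_⟩
  have hd : d y x ≤ k * d y x := by simpa only [hfy, hfix] using hcontr y hy x hx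
  have hd0 : d y x = 0 := by
    by_contra h0
    have := ENNReal.mul_lt_mul_right h0 (hfin y hy x hx) hk
    rw [mul_one, mul_comm] at this
    exact this.not_ge hd
  exact edist_le_zero.1 (by simpa [hd0] using hedist y hy x hx)

section Caratheodory

variable {E F : Type*} [NormedAddCommGroup E] [NormedSpace ℂ E]
  [NormedAddCommGroup F] [NormedSpace ℂ F]

noncomputable def caratheodoryMetric (M : Set E) (x v : E) : ℝ≥0∞ :=
  ⨆ (g : E → ℂ) (_ : DifferentiableOn ℂ g M ∧ MapsTo g M (ball 0 1)), ‖fderiv ℂ g x v‖ₑ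

variable {M : Set E}

theorem enorm_fderiv_le_caratheodoryMetric {g : E → ℂ} (hg : DifferentiableOn ℂ g M)
    (hgM : MapsTo g M (ball 0 1)) (x v : E) :
    ‖fderiv ℂ g x v‖ₑ ≤ caratheodoryMetric M x v :=
  le_iSup₂ (f := fun g (_ : DifferentiableOn ℂ g M ∧ MapsTo g M (ball 0 1)) =>
    ‖fderiv ℂ g x v‖ₑ) g ⟨hg, hgM⟩

theorem caratheodoryMetric_le {x : E} {δ : ℝ} (hδ : 0 < δ) (hball : ball x δ ⊆ M) (v : E) :
    caratheodoryMetric M x v ≤ ENNReal.ofReal (2 / δ) * ‖v‖ₑ := by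
  refine iSup₂_le fun g ⟨hg, hgM⟩ => (ContinuousLinearMap.le_opENorm _ v).trans ?_
  gcongr
  have hmaps : MapsTo g (ball x δ) (closedBall (g x) 2) := fun z hz => by
    have hz := hgM (hball hz)
    have hx := hgM (hball (mem_ball_self hδ))
    rw [mem_ball_zero_iff] at hz hx
    rw [mem_closedBall, dist_eq_norm]
    linarith [norm_sub_le (g z) (g x)]
  rw [← ofReal_norm]
  exact ENNReal.ofReal_le_ofReal <|
    Complex.norm_fderiv_le_div_of_mapsTo_ball (hg.mono hball) hmaps hδ

theorem enorm_le_caratheodoryMetric (hM : Bornology.IsBounded M) {x : E} (hx : x ∈ M) (v : E) :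
    ‖v‖ₑ ≤ ENNReal.ofReal (diam M + 1) * caratheodoryMetric M x v := by
  rcases eq_or_ne v 0 with rfl | hv
  · simp
  have hD : 0 < diam M + 1 := by linarith [diam_nonneg (s := M)]
  obtain ⟨L, hL, hLv⟩ := exists_dual_vector ℂ v (norm_ne_zero_iff.2 hv)
  set c : ℂ := Complex.ofReal (diam M + 1)⁻¹
  have hc : ‖c‖ = (diam M + 1)⁻¹ := by rw [Complex.norm_real, Real.norm_of_nonneg (by positivity)]
  have hderiv : HasFDerivAt (fun z => c • L (z - x)) (c • L) x :=
    (L.hasFDerivAt.comp x ((hasFDerivAt_id x).sub_const x)).const_smul c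
  have hmaps : MapsTo (fun z => c • L (z - x)) M (ball 0 1) := fun z hz => by
    rw [mem_ball_zero_iff, norm_smul, hc, inv_mul_lt_iff₀ hD, mul_one]
    calc ‖L (z - x)‖ ≤ ‖L‖ * ‖z - x‖ := L.le_opNorm _
      _ ≤ diam M := by rw [hL, one_mul, ← dist_eq_norm]; exact dist_le_diam_of_mem hM hz hx
      _ < diam M + 1 := lt_add_one _
  have hle := enorm_fderiv_le_caratheodoryMetric (by fun_prop) hmaps x v
  rw [hderiv.fderiv, smul_apply, hLv, ← ofReal_norm, norm_smul, hc,
    RCLike.norm_ofReal, abs_norm, ENNReal.ofReal_mul (inv_nonneg.2 hD.le), ofReal_norm] at hle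
  calc ‖v‖ₑ = ENNReal.ofReal (diam M + 1) * (ENNReal.ofReal (diam M + 1)⁻¹ * ‖v‖ₑ) := by
        rw [← mul_assoc, ← ENNReal.ofReal_mul hD.le, mul_inv_cancel₀ hD.ne', ENNReal.ofReal_one,
          one_mul]
    _ ≤ _ := by gcongr

theorem caratheodoryMetric_fderiv_le {M' : Set F} (hM : IsOpen M) (hM' : IsOpen M') {h : E → F}
    (hh : DifferentiableOn ℂ h M) (hmaps : MapsTo h M M') {x : E} (hx : x ∈ M) (v : E) :
    caratheodoryMetric M' (h x) (fderiv ℂ h x v) ≤ caratheodoryMetric M x v := by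
  refine iSup₂_le fun g ⟨hg, hgM'⟩ => ?_
  have hchain : fderiv ℂ (g ∘ h) x = (fderiv ℂ g (h x)).comp (fderiv ℂ h x) :=
    fderiv_comp x (hg.differentiableAt (hM'.mem_nhds (hmaps hx)))
      (hh.differentiableAt (hM.mem_nhds hx))
  have := enorm_fderiv_le_caratheodoryMetric (hg.comp hh hmaps) (hgM'.comp hmaps) x v
  rwa [hchain] at this

theorem caratheodoryMetric_smul (x : E) (c : ℂ) (v : E) :
    caratheodoryMetric M x (c • v) = ‖c‖ₑ * caratheodoryMetric M x v := by
  simp only [caratheodoryMetric, ENNReal.mul_iSup, map_smul, enorm_smul]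

theorem ofReal_one_add_mul_caratheodoryMetric_fderiv_le (hM : IsOpen M)
    (hMb : Bornology.IsBounded M) {f : E → E} (hf : DifferentiableOn ℂ f M) {ε τ : ℝ}
    (hτ : 0 ≤ τ) (hτε : τ * diam M < ε) (hfM : thickening ε (f '' M) ⊆ M) {x : E} (hx : x ∈ M)
    (v : E) :
    ENNReal.ofReal (1 + τ) * caratheodoryMetric M (f x) (fderiv ℂ f x v) ≤
      caratheodoryMetric M x v := by
  have hmaps : MapsTo f M M := fun z hz =>
    hfM <| self_subset_thickening ((mul_nonneg hτ diam_nonneg).trans_lt hτε) _ <|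
      mem_image_of_mem f hz
  set F : E → E := fun z => f z + (τ : ℂ) • (f z - f x)
  have hFM : MapsTo F M M := fun z hz => by
    refine hfM (mem_thickening_iff.2 ⟨f z, mem_image_of_mem f hz, ?_⟩)
    rw [dist_eq_norm, add_sub_cancel_left, norm_smul, Complex.norm_real, Real.norm_of_nonneg hτ]
    calc τ * ‖f z - f x‖ ≤ τ * diam M := by
          gcongr; rw [← dist_eq_norm]; exact dist_le_diam_of_mem hMb (hmaps hz) (hmaps hx)
      _ < ε := hτε
  have hFd : DifferentiableOn ℂ F M := hf.add ((hf.sub_const _).const_smul _)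
  have hFx : F x = f x := by simp [F]
  have hFderiv : fderiv ℂ F x v = ((1 + τ : ℝ) : ℂ) • fderiv ℂ f x v := by
    have hfx := (hf.differentiableAt (hM.mem_nhds hx)).hasFDerivAt
    have hF : HasFDerivAt F (fderiv ℂ f x + (τ : ℂ) • fderiv ℂ f x) x :=
      hfx.add ((hfx.sub_const (f x)).const_smul (τ : ℂ))
    rw [hF.fderiv]
    simp only [add_apply, smul_apply]
    push_cast
    module
  have := caratheodoryMetric_fderiv_le hM hM hFd hFM hx v
  rwa [hFx, hFderiv, caratheodoryMetric_smul, ← ofReal_norm, Complex.norm_real,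
    Real.norm_of_nonneg (by positivity)] at this

/-- Paths are parametrised by all of `ℝ` but stay in `M`, so that they can be composed with maps
holomorphic on `M`; derivatives may fail to exist on a countable set, so that paths can be
concatenated. -/
structure AdmissiblePath (M : Set E) (a b : E) where
  toFun : ℝ → E
  continuous_toFun : Continuous toFun
  mem : ∀ t, toFun t ∈ M
  source : toFun 0 = a
  target : toFun 1 = b
  exceptional : Set ℝ
  countable_exceptional : exceptional.Countable
  exists_hasDerivAt_norm_le :
    ∃ C, ∀ t ∈ Ioo (0 : ℝ) 1 \ exceptional, ∃ v, HasDerivAt toFun v t ∧ ‖v‖ ≤ C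

namespace AdmissiblePath

variable {a b c : E}

instance : CoeFun (AdmissiblePath M a b) fun _ => ℝ → E := ⟨toFun⟩

theorem exists_norm_deriv_le (p : AdmissiblePath M a b) :
    ∃ C, ∀ t ∈ Ioo (0 : ℝ) 1 \ p.exceptional, HasDerivAt p (deriv p t) t ∧ ‖deriv p t‖ ≤ C := by
  obtain ⟨C, hC⟩ := p.exists_hasDerivAt_norm_le
  refine ⟨C, fun t ht => ?_⟩
  obtain ⟨v, hv, hvC⟩ := hC t ht
  exact hv.deriv ▸ ⟨hv, hvC⟩

theorem ae_mem_Ioo_diff_exceptional (p : AdmissiblePath M a b) :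
    ∀ᵐ t ∂volume.restrict (Ioo (0 : ℝ) 1), t ∈ Ioo (0 : ℝ) 1 \ p.exceptional :=
  (ae_restrict_mem measurableSet_Ioo).and
    (ae_restrict_of_ae (p.countable_exceptional.ae_notMem volume))

theorem exists_ball_subset (hM : IsOpen M) (p : AdmissiblePath M a b) :
    ∃ δ > 0, ∀ t ∈ Icc (0 : ℝ) 1, ball (p t) δ ⊆ M := by
  obtain ⟨δ, hδ, hsub⟩ := (isCompact_Icc.image p.continuous_toFun).exists_thickening_subset_open hM
    (image_subset_iff.2 fun t _ => p.mem t)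
  exact ⟨δ, hδ, fun t ht => (ball_subset_thickening (mem_image_of_mem _ ht) δ).trans hsub⟩

noncomputable def segment (h : segment ℝ a b ⊆ M) : AdmissiblePath M a b where
  toFun t := AffineMap.lineMap a b (projIcc 0 1 zero_le_one t : ℝ)
  continuous_toFun := by fun_prop
  mem t := h ((segment_eq_image_lineMap ℝ a b).symm ▸ mem_image_of_mem _ (projIcc 0 1 _ t).2)
  source := by simp
  target := by simp
  exceptional := ∅
  countable_exceptional := countable_empty
  exists_hasDerivAt_norm_le := by
    refine ⟨‖b - a‖, fun t ht => ⟨b - a, ?_, le_rfl⟩⟩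
    refine AffineMap.hasDerivAt_lineMap.congr_of_eventuallyEq ?_
    filter_upwards [Ioo_mem_nhds ht.1.1 ht.1.2] with s hs
    rw [projIcc_of_mem _ (Ioo_subset_Icc_self hs)]

noncomputable def trans (p : AdmissiblePath M a b) (q : AdmissiblePath M b c) :
    AdmissiblePath M a c where
  toFun t := if t ≤ 1 / 2 then p (2 * t) else q (2 * t - 1)
  continuous_toFun := by
    refine Continuous.if_le (p.continuous_toFun.comp (by fun_prop))
      (q.continuous_toFun.comp (by fun_prop)) continuous_id continuous_const fun t ht => ?_
    simp only [ht, show (2 : ℝ) * (1 / 2) = 1 by norm_num, sub_self]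
    exact p.target.trans q.source.symm
  mem t := by split_ifs <;> apply AdmissiblePath.mem
  source := by norm_num [p.source]
  target := by norm_num [q.target]
  exceptional := {1 / 2} ∪ (fun t => 2 * t) ⁻¹' p.exceptional ∪
    (fun t => 2 * t - 1) ⁻¹' q.exceptional
  countable_exceptional := by
    refine ((countable_singleton _).union (p.countable_exceptional.preimage ?_)).union
      (q.countable_exceptional.preimage ?_) <;> intro s t hst <;> simpa using hst
  exists_hasDerivAt_norm_le := by
    obtain ⟨Cp, hCp⟩ := p.exists_hasDerivAt_norm_le
    obtain ⟨Cq, hCq⟩ := q.exists_hasDerivAt_norm_le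
    refine ⟨2 * max Cp Cq, fun t ⟨⟨ht0, ht1⟩, hexc⟩ => ?_⟩
    simp only [mem_union, mem_singleton_iff, mem_preimage, not_or] at hexc
    obtain ⟨⟨hhalf, hp⟩, hq⟩ := hexc
    rcases lt_or_gt_of_ne hhalf with hlt | hgt
    · obtain ⟨v, hv, hvC⟩ := hCp (2 * t) ⟨⟨by linarith, by linarith⟩, hp⟩
      have hscale : HasDerivAt (fun s : ℝ => 2 * s) 2 t := by
        simpa using (hasDerivAt_id t).const_mul 2
      refine ⟨(2 : ℝ) • v, (hv.scomp t hscale).congr_of_eventuallyEq ?_, ?_⟩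
      · filter_upwards [Iio_mem_nhds hlt] with s hs
        exact if_pos (mem_Iio.1 hs).le
      · rw [norm_smul, Real.norm_two]
        gcongr
        exact hvC.trans (le_max_left _ _)
    · obtain ⟨v, hv, hvC⟩ := hCq (2 * t - 1) ⟨⟨by linarith, by linarith⟩, hq⟩
      have hscale : HasDerivAt (fun s : ℝ => 2 * s - 1) 2 t := by
        simpa using ((hasDerivAt_id t).const_mul 2).sub_const 1
      refine ⟨(2 : ℝ) • v, (hv.scomp t hscale).congr_of_eventuallyEq ?_, ?_⟩
      · filter_upwards [Ioi_mem_nhds hgt] with s hs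
        exact if_neg (not_le.2 hs)
      · rw [norm_smul, Real.norm_two]
        gcongr
        exact hvC.trans (le_max_right _ _)

theorem hasDerivAt_comp (hM : IsOpen M) {h : E → F} (hh : DifferentiableOn ℂ h M)
    (p : AdmissiblePath M a b) {t : ℝ} (ht : t ∈ Ioo (0 : ℝ) 1 \ p.exceptional) :
    HasDerivAt (h ∘ p) (fderiv ℂ h (p t) (deriv p t)) t := by
  obtain ⟨C, hC⟩ := p.exists_norm_deriv_le
  exact ((hh.differentiableAt (hM.mem_nhds (p.mem t))).hasFDerivAt.restrictScalars ℝ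
    ).comp_hasDerivAt t (hC t ht).1

noncomputable def map {M' : Set F} (hM : IsOpen M) (hM'b : Bornology.IsBounded M') {h : E → F}
    (hh : DifferentiableOn ℂ h M) (hmaps : MapsTo h M M') (p : AdmissiblePath M a b) :
    AdmissiblePath M' (h a) (h b) where
  toFun := h ∘ p
  continuous_toFun := hh.continuousOn.comp_continuous p.continuous_toFun p.mem
  mem t := hmaps (p.mem t)
  source := congrArg h p.source
  target := congrArg h p.target
  exceptional := p.exceptional
  countable_exceptional := p.countable_exceptional
  exists_hasDerivAt_norm_le := by
    obtain ⟨δ, hδ, hball⟩ := p.exists_ball_subset hM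
    obtain ⟨C, hC⟩ := p.exists_norm_deriv_le
    refine ⟨diam M' / δ * C, fun t ht => ⟨_, p.hasDerivAt_comp hM hh ht, ?_⟩⟩
    have hsub := hball t (Ioo_subset_Icc_self ht.1)
    have hmaps' : MapsTo h (ball (p t) δ) (closedBall (h (p t)) (diam M')) := fun z hz =>
      dist_le_diam_of_mem hM'b (hmaps (hsub hz)) (hmaps (p.mem t))
    have hnorm := Complex.norm_fderiv_le_div_of_mapsTo_ball (hh.mono hsub) hmaps' hδ
    calc ‖fderiv ℂ h (p t) (deriv p t)‖ ≤ diam M' / δ * ‖deriv p t‖ :=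
          (fderiv ℂ h (p t)).le_of_opNorm_le hnorm _
      _ ≤ diam M' / δ * C := by gcongr; exact (hC t ht).2

noncomputable def caratheodoryLength (p : AdmissiblePath M a b) : ℝ≥0∞ :=
  ∫⁻ t in Ioo 0 1, caratheodoryMetric M (p t) (deriv p t)

theorem caratheodoryLength_lt_top (hM : IsOpen M) (p : AdmissiblePath M a b) :
    p.caratheodoryLength < ⊤ := by
  obtain ⟨δ, hδ, hball⟩ := p.exists_ball_subset hM
  obtain ⟨C, hC⟩ := p.exists_norm_deriv_le
  have hbound : ∀ᵐ t ∂volume.restrict (Ioo (0 : ℝ) 1),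
      caratheodoryMetric M (p t) (deriv p t) ≤ ENNReal.ofReal (2 / δ) * ENNReal.ofReal C := by
    filter_upwards [p.ae_mem_Ioo_diff_exceptional] with t ht
    refine (caratheodoryMetric_le hδ (hball t (Ioo_subset_Icc_self ht.1)) _).trans ?_
    rw [← ofReal_norm]
    gcongr
    exact (hC t ht).2
  calc p.caratheodoryLength ≤ ∫⁻ _ in Ioo (0 : ℝ) 1, ENNReal.ofReal (2 / δ) * ENNReal.ofReal C :=
        lintegral_mono_ae hbound
    _ < ⊤ := by rw [setLIntegral_const, Real.volume_Ioo]; finiteness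

theorem edist_le_mul_caratheodoryLength [CompleteSpace E] (hMb : Bornology.IsBounded M)
    (p : AdmissiblePath M a b) :
    edist a b ≤ ENNReal.ofReal (diam M + 1) * p.caratheodoryLength := by
  obtain ⟨C, hC⟩ := p.exists_norm_deriv_le
  have hint : IntervalIntegrable (deriv p) volume 0 1 :=
    (intervalIntegrable_iff_integrableOn_Ioo_of_le zero_le_one).2 <|
      Measure.integrableOn_of_bounded (by simp) (aestronglyMeasurable_deriv _ _)
        (p.ae_mem_Ioo_diff_exceptional.mono fun t ht => (hC t ht).2)
  have hftc : ∫ t in (0 : ℝ)..1, deriv p t = b - a := by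
    rw [integral_eq_of_hasDerivAt_off_countable_of_le _ _ zero_le_one p.countable_exceptional
      p.continuous_toFun.continuousOn (fun t ht => (hC t ht).1) hint, p.source, p.target]
  calc edist a b = ‖∫ t in Ioo (0 : ℝ) 1, deriv p t‖ₑ := by
        rw [edist_comm, edist_eq_enorm_sub, ← hftc, intervalIntegral.integral_of_le zero_le_one,
          integral_Ioc_eq_integral_Ioo]
    _ ≤ ∫⁻ t in Ioo (0 : ℝ) 1, ‖deriv p t‖ₑ := enorm_integral_le_lintegral_enorm _
    _ ≤ ∫⁻ t in Ioo (0 : ℝ) 1,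
          ENNReal.ofReal (diam M + 1) * caratheodoryMetric M (p t) (deriv p t) :=
        lintegral_mono fun t => enorm_le_caratheodoryMetric hMb (p.mem t) _
    _ = ENNReal.ofReal (diam M + 1) * p.caratheodoryLength :=
        lintegral_const_mul' _ _ ENNReal.ofReal_ne_top

theorem mul_caratheodoryLength_map_le {M' : Set F} (hM : IsOpen M) (hM'b : Bornology.IsBounded M')
    {h : E → F} (hh : DifferentiableOn ℂ h M) (hmaps : MapsTo h M M') {c : ℝ≥0∞}
    (hc : ∀ x ∈ M, ∀ v, c * caratheodoryMetric M' (h x) (fderiv ℂ h x v) ≤ caratheodoryMetric M x v)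
    (p : AdmissiblePath M a b) :
    c * (p.map hM hM'b hh hmaps).caratheodoryLength ≤ p.caratheodoryLength := by
  refine (lintegral_const_mul_le _ _).trans (lintegral_mono_ae ?_)
  filter_upwards [p.ae_mem_Ioo_diff_exceptional] with t ht
  change c * caratheodoryMetric M' (h (p t)) (deriv (h ∘ p) t) ≤ _
  rw [(p.hasDerivAt_comp hM hh ht).deriv]
  exact hc _ (p.mem t) _

end AdmissiblePath

noncomputable def innerCaratheodoryDist (M : Set E) (a b : E) : ℝ≥0∞ :=
  ⨅ p : AdmissiblePath M a b, p.caratheodoryLength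

theorem nonempty_admissiblePath (hM : IsOpen M) (hconn : IsPreconnected M) {a b : E}
    (ha : a ∈ M) (hb : b ∈ M) : Nonempty (AdmissiblePath M a b) := by
  refine hconn.induction₂' (fun x y => Nonempty (AdmissiblePath M x y)) (fun x hx => ?_)
    (fun x y z _ _ _ ⟨p⟩ ⟨q⟩ => ⟨p.trans q⟩) ha hb
  obtain ⟨r, hr, hball⟩ := isOpen_iff.1 hM x hx
  filter_upwards [nhdsWithin_le_nhds (ball_mem_nhds x hr)] with y hy
  have hseg := (convex_ball x r).segment_subset (mem_ball_self hr) hy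
  exact ⟨⟨.segment (hseg.trans hball)⟩, ⟨.segment ((segment_symm ℝ y x ▸ hseg).trans hball)⟩⟩

theorem innerCaratheodoryDist_lt_top (hM : IsOpen M) (hconn : IsPreconnected M) {a b : E}
    (ha : a ∈ M) (hb : b ∈ M) : innerCaratheodoryDist M a b < ⊤ := by
  obtain ⟨p⟩ := nonempty_admissiblePath hM hconn ha hb
  exact (iInf_le _ p).trans_lt (p.caratheodoryLength_lt_top hM)

theorem edist_le_mul_innerCaratheodoryDist [CompleteSpace E] (hMb : Bornology.IsBounded M)
    (a b : E) : edist a b ≤ ENNReal.ofReal (diam M + 1) * innerCaratheodoryDist M a b := by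
  have hD : 0 < diam M + 1 := by linarith [diam_nonneg (s := M)]
  rw [innerCaratheodoryDist, ENNReal.mul_iInf_of_ne (ENNReal.ofReal_pos.2 hD).ne'
    ENNReal.ofReal_ne_top]
  exact le_iInf fun p => p.edist_le_mul_caratheodoryLength hMb

theorem mul_innerCaratheodoryDist_map_le {M' : Set F} (hM : IsOpen M)
    (hM'b : Bornology.IsBounded M') {h : E → F} (hh : DifferentiableOn ℂ h M)
    (hmaps : MapsTo h M M') {c : ℝ≥0∞}
    (hc : ∀ x ∈ M, ∀ v, c * caratheodoryMetric M' (h x) (fderiv ℂ h x v) ≤ caratheodoryMetric M x v)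
    (a b : E) : c * innerCaratheodoryDist M' (h a) (h b) ≤ innerCaratheodoryDist M a b :=
  le_iInf fun p => (mul_le_mul_right (iInf_le _ (p.map hM hM'b hh hmaps)) c).trans
    (p.mul_caratheodoryLength_map_le hM hM'b hh hmaps hc)

end Caratheodory

/-- Earle–Hamilton: a holomorphic map of a bounded connected open set M ⊂ ℂ^N
into itself which maps M strictly inside M has a unique fixed point. -/
theorem stmt_1 (N : ℕ) (M : Set (EuclideanSpace ℂ (Fin N)))
    (hOpen : IsOpen M) (hConn : IsConnected M) (hBdd : Bornology.IsBounded M)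
    (f : EuclideanSpace ℂ (Fin N) → EuclideanSpace ℂ (Fin N))
    (hMaps : Set.MapsTo f M M) (hHol : DifferentiableOn ℂ f M)
    (hStrict : ∃ ε > (0 : ℝ), Metric.thickening ε (f '' M) ⊆ M) :
    ∃! x, x ∈ M ∧ f x = x := by
  obtain ⟨ε, hε, hfM⟩ := hStrict
  have hD : 0 < diam M + 1 := by linarith [diam_nonneg (s := M)]
  set τ := ε / (diam M + 1)
  have hτ : 0 < τ := div_pos hε hD
  have hτε : τ * diam M < ε := by
    rw [div_mul_eq_mul_div, div_lt_iff₀ hD]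
    exact mul_lt_mul_of_pos_left (lt_add_one _) hε
  set c := ENNReal.ofReal (1 + τ)
  have hc : 1 < c := ENNReal.one_lt_ofReal.2 (by linarith)
  refine exists_unique_fixedPoint_of_contracting (innerCaratheodoryDist M) (ENNReal.inv_lt_one.2 hc)
    ENNReal.ofReal_ne_top hConn.nonempty hHol.continuousOn
    ((closure_subset_thickening hε _).trans hfM)
    (fun a ha b hb => (innerCaratheodoryDist_lt_top hOpen hConn.isPreconnected ha hb).ne)
    (fun a _ b _ => edist_le_mul_innerCaratheodoryDist hBdd a b) fun a _ b _ => ?_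
  rw [← ENNReal.mul_le_iff_le_inv (zero_lt_one.trans hc).ne' ENNReal.ofReal_ne_top]
  exact mul_innerCaratheodoryDist_map_le hOpen hBdd hHol hMaps
    (fun x hx v =>
      ofReal_one_add_mul_caratheodoryMetric_fderiv_le hOpen hBdd hHol hτ.le hτε hfM hx v) a b
end

section
/- Let M ⊂ ℂ^N be a bounded connected open set and let f : M → M be holomorphic such that f maps M strictly inside M, i.e. there exists ε > 0 such that the ε-neighbourhood of f(M) is contained in M. Then for every integer m ≥ 1 the iterate f^m has a unique fixed point in M, and this fixed point coincides with the unique fixed point of f; consequently the set of periods of periodic points of f is exactly {1}. -/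
/-!
The Carathéodory–Reiffen metric `α(x, v) = sup ‖g'(x) v‖`, over holomorphic `g : M → 𝔻̄`, does
not increase under holomorphic self-maps of `M`, and on a bounded domain it is comparable to the
norm: from above by the Cauchy (Schwarz) estimate on a ball in `M`, from below by a normalised
linear functional. Since `f(M)` lies `ε`-deep inside `M`, the map `f + t (f - f w)` is still a
self-map of `M` for small `t > 0`, so `f` contracts `α` by the factor `(1 + t)⁻¹`. Hence
`‖(fⁿ)'‖` decays geometrically on the connected open set `thickening (ε / 2) (f(M))`, where any
two orbits then approach each other geometrically. An orbit is therefore Cauchy and converges to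
a fixed point; every periodic point lies in `f(M)`, is attracted to it, and so equals it.
-/

open Metric Set Function Filter Topology

theorem IsPreconnected.thickening {E : Type*} [SeminormedAddCommGroup E] [NormedSpace ℝ E]
    {s : Set E} (hs : IsPreconnected s) (δ : ℝ) : IsPreconnected (thickening δ s) := by
  rw [← add_ball_zero, ← image2_add, ← image_prod]
  exact (hs.prod (convex_ball (0 : E) δ).isPreconnected).image _ continuous_add.continuousOn

theorem IsPreconnected.exists_dist_le_mul_of_norm_fderiv_le {𝕜 E F : Type*} [RCLike 𝕜]
    [NormedAddCommGroup E] [NormedSpace ℝ E] [NormedSpace 𝕜 E] [NormedAddCommGroup F]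
    [NormedSpace 𝕜 F] {U : Set E} (hU : IsPreconnected U) (hUo : IsOpen U) {g : ℕ → E → F}
    {b : ℕ → ℝ} (hg : ∀ n, ∀ x ∈ U, DifferentiableAt 𝕜 (g n) x)
    (hb : ∀ n, ∀ x ∈ U, ‖fderiv 𝕜 (g n) x‖ ≤ b n) {x y : E} (hx : x ∈ U) (hy : y ∈ U) :
    ∃ C, ∀ n, dist (g n x) (g n y) ≤ C * b n := by
  refine hU.induction₂ (fun x y => ∃ C, ∀ n, dist (g n x) (g n y) ≤ C * b n)
    (fun x hx => ?_) (fun x y z _ _ _ ⟨C₁, h₁⟩ ⟨C₂, h₂⟩ => ⟨C₁ + C₂, fun n => ?_⟩)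
    (fun x y _ _ ⟨C, hC⟩ => ⟨C, fun n => dist_comm (g n x) (g n y) ▸ hC n⟩) hx hy
  · obtain ⟨ρ, hρ, hball⟩ := Metric.isOpen_iff.1 hUo x hx
    filter_upwards [nhdsWithin_le_nhds (ball_mem_nhds x hρ)] with y hy
    refine ⟨ρ, fun n => ?_⟩
    have hbn : 0 ≤ b n := (norm_nonneg _).trans (hb n x hx)
    calc dist (g n x) (g n y) = ‖g n y - g n x‖ := dist_eq_norm' _ _
      _ ≤ b n * ‖y - x‖ := (convex_ball x ρ).norm_image_sub_le_of_norm_fderiv_le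
          (fun z hz => hg n z (hball hz)) (fun z hz => hb n z (hball hz)) (mem_ball_self hρ) hy
      _ ≤ ρ * b n := by rw [mul_comm, ← dist_eq_norm]; gcongr; exact (mem_ball.1 hy).le
  · calc dist (g n x) (g n z) ≤ dist (g n x) (g n y) + dist (g n y) (g n z) := dist_triangle _ _ _
      _ ≤ C₁ * b n + C₂ * b n := add_le_add (h₁ n) (h₂ n)
      _ = (C₁ + C₂) * b n := (add_mul _ _ _).symm

theorem IsPeriodicPt.eq_of_dist_iterate_le {X : Type*} [MetricSpace X] {f : X → X} {m : ℕ}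
    {x y : X} (hm : 0 < m) (hx : IsPeriodicPt f m x) (hy : IsPeriodicPt f m y) {r C : ℝ}
    (hr₀ : 0 ≤ r) (hr₁ : r < 1) (hC : ∀ n, dist (f^[n] x) (f^[n] y) ≤ C * r ^ n) : x = y := by
  have hlim : Tendsto (fun k => C * (r ^ m) ^ k) atTop (𝓝 0) := by
    simpa using (tendsto_pow_atTop_nhds_zero_of_lt_one (by positivity)
      (pow_lt_one₀ hr₀ hr₁ hm.ne')).const_mul C
  refine dist_le_zero.1 (ge_of_tendsto' hlim fun k => ?_)
  calc dist x y = dist (f^[m * k] x) (f^[m * k] y) := by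
        rw [(hx.mul_const k).eq, (hy.mul_const k).eq]
    _ ≤ C * (r ^ m) ^ k := by rw [← pow_mul]; exact hC _

theorem exists_isFixedPt_of_dist_iterate_le {X : Type*} [MetricSpace X] [CompleteSpace X]
    {f : X → X} {A : Set X} (hA : MapsTo f A A) {a : X} (ha : a ∈ A)
    (hf : ∀ y ∈ closure A, ContinuousAt f y) {r C : ℝ} (hr : r < 1)
    (hC : ∀ n, dist (f^[n] a) (f^[n] (f a)) ≤ C * r ^ n) : ∃ x₀ ∈ closure A, IsFixedPt f x₀ := by
  obtain ⟨x₀, hlim⟩ := cauchySeq_tendsto_of_complete <|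
    cauchySeq_of_le_geometric (f := fun n => f^[n] a) r C hr fun n => by
      rw [iterate_succ_apply]; exact hC n
  have hx₀ : x₀ ∈ closure A :=
    mem_closure_of_tendsto hlim (Eventually.of_forall fun n => hA.iterate n ha)
  exact ⟨x₀, hx₀, isFixedPt_of_tendsto_iterate hlim (hf x₀ hx₀)⟩

section Caratheodory

variable {E : Type*} [NormedAddCommGroup E] [NormedSpace ℂ E] {M : Set E} {x v : E} {ρ : ℝ}

def holToUnitDisc (M : Set E) : Set (E → ℂ) :=
  {g | DifferentiableOn ℂ g M ∧ ∀ z ∈ M, ‖g z‖ ≤ 1}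

-- The Carathéodory–Reiffen metric. `sSup` of a set unbounded above is `0`, so it is only
-- meaningful at interior points of `M`, where `le_crMetric` applies.
noncomputable def crMetric (M : Set E) (x v : E) : ℝ :=
  sSup ((fun g => ‖fderiv ℂ g x v‖) '' holToUnitDisc M)

lemma holToUnitDisc_nonempty : (holToUnitDisc M).Nonempty :=
  ⟨fun _ => 0, differentiableOn_const 0, by simp⟩

lemma norm_fderiv_apply_le_of_mem_holToUnitDisc {g : E → ℂ} (hg : g ∈ holToUnitDisc M)
    (hρ : 0 < ρ) (hball : ball x ρ ⊆ M) : ‖fderiv ℂ g x v‖ ≤ 2 / ρ * ‖v‖ := by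
  refine (ContinuousLinearMap.le_opNorm _ _).trans (mul_le_mul_of_nonneg_right ?_ (norm_nonneg v))
  refine Complex.norm_fderiv_le_div_of_mapsTo_ball (hg.1.mono hball) (fun z hz => ?_) hρ
  rw [mem_closedBall, dist_eq_norm]
  calc ‖g z - g x‖ ≤ ‖g z‖ + ‖g x‖ := norm_sub_le _ _
    _ ≤ 1 + 1 := add_le_add (hg.2 z (hball hz)) (hg.2 x (hball (mem_ball_self hρ)))
    _ = 2 := one_add_one_eq_two

lemma crMetric_le (hρ : 0 < ρ) (hball : ball x ρ ⊆ M) : crMetric M x v ≤ 2 / ρ * ‖v‖ :=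
  csSup_le (holToUnitDisc_nonempty.image _) <| forall_mem_image.2 fun _ hg =>
    norm_fderiv_apply_le_of_mem_holToUnitDisc hg hρ hball

lemma le_crMetric (hx : M ∈ 𝓝 x) {g : E → ℂ} (hg : g ∈ holToUnitDisc M) :
    ‖fderiv ℂ g x v‖ ≤ crMetric M x v := by
  obtain ⟨ρ, hρ, hball⟩ := Metric.mem_nhds_iff.1 hx
  refine le_csSup ⟨2 / ρ * ‖v‖, forall_mem_image.2 fun _ hg' => ?_⟩ (mem_image_of_mem _ hg)
  exact norm_fderiv_apply_le_of_mem_holToUnitDisc hg' hρ hball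

lemma crMetric_smul (c : ℂ) : crMetric M x (c • v) = ‖c‖ * crMetric M x v := by
  rw [crMetric, crMetric, ← smul_eq_mul, ← Real.sSup_smul_of_nonneg (norm_nonneg c),
    ← image_smul, image_image]
  simp only [map_smul, smul_eq_mul, norm_mul]

lemma crMetric_fderiv_le (hM : IsOpen M) {h : E → E} (hmaps : MapsTo h M M)
    (hd : DifferentiableOn ℂ h M) (hx : x ∈ M) :
    crMetric M (h x) (fderiv ℂ h x v) ≤ crMetric M x v := by
  refine csSup_le (holToUnitDisc_nonempty.image _) (forall_mem_image.2 fun g hg => ?_)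
  have hcomp : g ∘ h ∈ holToUnitDisc M := ⟨hg.1.comp hd hmaps, fun z hz => hg.2 _ (hmaps hz)⟩
  have := le_crMetric (v := v) (hM.mem_nhds hx) hcomp
  rwa [fderiv_comp x (hg.1.differentiableAt (hM.mem_nhds (hmaps hx)))
    (hd.differentiableAt (hM.mem_nhds hx))] at this

lemma norm_le_mul_crMetric (hx : M ∈ 𝓝 x) {D : ℝ} (hMD : M ⊆ ball x D) :
    ‖v‖ ≤ D * crMetric M x v := by
  have hD : 0 < D := pos_of_mem_ball (hMD (mem_of_mem_nhds hx))
  obtain ⟨ℓ, hℓ, hℓv⟩ := exists_dual_vector'' ℂ v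
  set g : E → ℂ := (D⁻¹ : ℂ) • fun z => ℓ z - ℓ x
  have hg' : ∀ y, HasFDerivAt g ((D⁻¹ : ℂ) • ℓ) y := fun y =>
    (ℓ.hasFDerivAt.sub_const (ℓ x)).const_smul _
  have hg : g ∈ holToUnitDisc M := by
    refine ⟨fun y _ => (hg' y).differentiableAt.differentiableWithinAt, fun z hz => ?_⟩
    have hℓz : ‖ℓ (z - x)‖ ≤ D := calc
      ‖ℓ (z - x)‖ ≤ ‖ℓ‖ * ‖z - x‖ := ℓ.le_opNorm _
      _ ≤ 1 * D := by gcongr; exact (mem_ball_iff_norm.1 (hMD hz)).le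
      _ = D := one_mul D
    simp only [g, Pi.smul_apply, ← map_sub, norm_smul, norm_inv, Complex.norm_real,
      Real.norm_of_nonneg hD.le]
    exact inv_mul_le_one_of_le₀ hℓz hD.le
  calc ‖v‖ = D * ‖fderiv ℂ g x v‖ := by
        simp [(hg' x).fderiv, hℓv, abs_of_pos hD, hD.ne']
    _ ≤ D * crMetric M x v := by gcongr; exact le_crMetric hx hg

end Caratheodory

section EarleHamilton

variable {E : Type*} [NormedAddCommGroup E] [NormedSpace ℂ E] {M : Set E} {f : E → E} {ε t : ℝ}

lemma one_add_mul_crMetric_fderiv_le (hM : IsOpen M) (hMb : Bornology.IsBounded M)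
    (hf : MapsTo f M M) (hfd : DifferentiableOn ℂ f M) (hε : thickening ε (f '' M) ⊆ M)
    (ht : 0 ≤ t) (htε : t * diam M < ε) {w : E} (hw : w ∈ M) (v : E) :
    (1 + t) * crMetric M (f w) (fderiv ℂ f w v) ≤ crMetric M w v := by
  set h : E → E := fun z => f z + (t : ℂ) • (f z - f w)
  have hh : MapsTo h M M := fun z hz => hε <| mem_thickening_iff.2 ⟨f z, mem_image_of_mem f hz, by
    calc dist (h z) (f z) = t * ‖f z - f w‖ := by
          simp [h, dist_eq_norm, norm_smul, abs_of_nonneg ht]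
      _ ≤ t * diam M := by
          gcongr; rw [← dist_eq_norm]; exact dist_le_diam_of_mem hMb (hf hz) (hf hw)
      _ < ε := htε⟩
  have hhd : DifferentiableOn ℂ h M := hfd.add ((hfd.sub_const (f w)).const_smul (t : ℂ))
  have hfw : HasFDerivAt f (fderiv ℂ f w) w := (hfd.differentiableAt (hM.mem_nhds hw)).hasFDerivAt
  have hhw : HasFDerivAt h (((1 + t : ℝ) : ℂ) • fderiv ℂ f w) w :=
    (hfw.add ((hfw.sub_const (f w)).const_smul (t : ℂ))).congr_fderiv (by
      push_cast; rw [add_smul, one_smul])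
  calc (1 + t) * crMetric M (f w) (fderiv ℂ f w v) = crMetric M (h w) (fderiv ℂ h w v) := by
        rw [hhw.fderiv, smul_apply, crMetric_smul, Complex.norm_real,
          Real.norm_of_nonneg (by positivity)]
        simp [h]
    _ ≤ crMetric M w v := crMetric_fderiv_le hM hh hhd hw

variable {x : E}

lemma one_add_pow_mul_crMetric_fderiv_iterate_le (hM : IsOpen M) (hMb : Bornology.IsBounded M)
    (hf : MapsTo f M M) (hfd : DifferentiableOn ℂ f M) (hε : thickening ε (f '' M) ⊆ M)
    (ht : 0 ≤ t) (htε : t * diam M < ε) (hx : x ∈ M) (v : E) (n : ℕ) :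
    (1 + t) ^ n * crMetric M (f^[n] x) (fderiv ℂ f^[n] x v) ≤ crMetric M x v := by
  induction n with
  | zero => simp
  | succ n ih =>
    have hxn : f^[n] x ∈ M := hf.iterate n hx
    rw [iterate_succ', fderiv_comp x (hfd.differentiableAt (hM.mem_nhds hxn))
      ((hfd.iterate hf n).differentiableAt (hM.mem_nhds hx)), comp_apply,
      ContinuousLinearMap.comp_apply, pow_succ, mul_assoc]
    exact (mul_le_mul_of_nonneg_left (one_add_mul_crMetric_fderiv_le hM hMb hf hfd hε ht htε hxn _)
      (by positivity)).trans ih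

lemma norm_fderiv_iterate_le (hM : IsOpen M) (hMb : Bornology.IsBounded M)
    (hf : MapsTo f M M) (hfd : DifferentiableOn ℂ f M) (hε : thickening ε (f '' M) ⊆ M)
    (ht : 0 ≤ t) (htε : t * diam M < ε) {ρ : ℝ} (hρ : 0 < ρ) (hball : ball x ρ ⊆ M) (n : ℕ) :
    ‖fderiv ℂ f^[n] x‖ ≤ 2 * (diam M + 1) / ρ * (1 + t)⁻¹ ^ n := by
  have hx : x ∈ M := hball (mem_ball_self hρ)
  have hxn : f^[n] x ∈ M := hf.iterate n hx
  refine ContinuousLinearMap.opNorm_le_bound _ (by positivity) fun v => ?_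
  have hMball : M ⊆ ball (f^[n] x) (diam M + 1) := fun z hz =>
    (dist_le_diam_of_mem hMb hz hxn).trans_lt (lt_add_one _)
  have hdecay : (1 + t) ^ n * crMetric M (f^[n] x) (fderiv ℂ f^[n] x v) ≤ 2 / ρ * ‖v‖ :=
    (one_add_pow_mul_crMetric_fderiv_iterate_le hM hMb hf hfd hε ht htε hx v n).trans
      (crMetric_le hρ hball)
  calc ‖fderiv ℂ f^[n] x v‖ ≤ (diam M + 1) * crMetric M (f^[n] x) (fderiv ℂ f^[n] x v) :=
        norm_le_mul_crMetric (hM.mem_nhds hxn) hMball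
    _ ≤ (diam M + 1) * ((1 + t)⁻¹ ^ n * (2 / ρ * ‖v‖)) := by
        gcongr
        rwa [inv_pow, inv_mul_eq_div, le_div_iff₀ (by positivity), mul_comm]
    _ = 2 * (diam M + 1) / ρ * (1 + t)⁻¹ ^ n * ‖v‖ := by ring

lemma exists_dist_iterate_le_of_mem_thickening (hM : IsOpen M) (hMc : IsPreconnected M)
    (hMb : Bornology.IsBounded M) (hf : MapsTo f M M) (hfd : DifferentiableOn ℂ f M)
    (hε₀ : 0 < ε) (hε : thickening ε (f '' M) ⊆ M) (ht : 0 ≤ t) (htε : t * diam M < ε) {a b : E}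
    (ha : a ∈ thickening (ε / 2) (f '' M)) (hb : b ∈ thickening (ε / 2) (f '' M)) :
    ∃ C, ∀ n, dist (f^[n] a) (f^[n] b) ≤ C * (1 + t)⁻¹ ^ n := by
  have hball : ∀ x ∈ thickening (ε / 2) (f '' M), ball x (ε / 2) ⊆ M := fun x hx =>
    (ball_subset_thickening hx _).trans <| (thickening_thickening_subset _ _ _).trans <|
      (add_halves ε).symm ▸ hε
  obtain ⟨C, hC⟩ :=
    ((hMc.image f hfd.continuousOn).thickening _).exists_dist_le_mul_of_norm_fderiv_le (𝕜 := ℂ)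
      (g := fun n => f^[n]) isOpen_thickening
      (fun n x hx => (hfd.iterate hf n).differentiableAt
        (hM.mem_nhds (hball x hx (mem_ball_self (half_pos hε₀)))))
      (fun n x hx => norm_fderiv_iterate_le hM hMb hf hfd hε ht htε (half_pos hε₀) (hball x hx) n)
      ha hb
  exact ⟨C * (2 * (diam M + 1) / (ε / 2)), fun n => (hC n).trans_eq (mul_assoc _ _ _).symm⟩

theorem exists_isFixedPt_forall_isPeriodicPt_eq [CompleteSpace E] (hM : IsOpen M)
    (hMc : IsConnected M) (hMb : Bornology.IsBounded M) (hf : MapsTo f M M)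
    (hfd : DifferentiableOn ℂ f M) (hε : ∃ ε > 0, thickening ε (f '' M) ⊆ M) :
    ∃ x₀ ∈ M, IsFixedPt f x₀ ∧ ∀ m, 0 < m → ∀ y ∈ M, IsPeriodicPt f m y → y = x₀ := by
  obtain ⟨ε, hε₀, hε⟩ := hε
  set t := ε / (diam M + 1)
  have ht : 0 < t := by positivity
  have htε : t * diam M < ε := by
    rw [div_mul_eq_mul_div, div_lt_iff₀ (by positivity)]
    exact mul_lt_mul_of_pos_left (lt_add_one _) hε₀
  have hr : (1 + t)⁻¹ < 1 := inv_lt_one_of_one_lt₀ (by linarith)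
  set U := thickening (ε / 2) (f '' M)
  have hfU : ∀ z ∈ M, f z ∈ U := fun z hz =>
    self_subset_thickening (half_pos hε₀) _ (mem_image_of_mem f hz)
  have hclU : closure (f '' M) ⊆ U := closure_subset_thickening (half_pos hε₀) _
  have hUM : U ⊆ M := (thickening_mono (half_le_self hε₀.le) _).trans hε
  have hdecay {a b} := exists_dist_iterate_le_of_mem_thickening (a := a) (b := b) hM
    hMc.isPreconnected hMb hf hfd hε₀ hε ht.le htε
  obtain ⟨x, hx⟩ := hMc.nonempty
  obtain ⟨C, hC⟩ := hdecay (hfU x hx) (hfU _ (hf hx))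
  obtain ⟨x₀, hx₀, hfix⟩ := exists_isFixedPt_of_dist_iterate_le
    ((mapsTo_image f M).mono_left hf.image_subset) (mem_image_of_mem f hx)
    (fun y hy => (hfd.differentiableAt (hM.mem_nhds (hUM (hclU hy)))).continuousAt) hr hC
  refine ⟨x₀, hUM (hclU hx₀), hfix, fun m hm y hy hy' => ?_⟩
  obtain ⟨k, rfl⟩ : ∃ k, m = k + 1 := ⟨m - 1, by omega⟩
  have hyU : y ∈ U := by rw [← hy', iterate_succ_apply']; exact hfU _ (hf.iterate k hy)
  obtain ⟨C, hC⟩ := hdecay hyU (hclU hx₀)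
  exact IsPeriodicPt.eq_of_dist_iterate_le hm hy' (hfix.isPeriodicPt _) (by positivity) hr hC

end EarleHamilton

/-- Under the Earle–Hamilton hypotheses, every iterate f^m (m ≥ 1) has a unique
fixed point in M, which coincides with the unique fixed point of f, and hence
the set of periods of periodic points of f is exactly {1}. -/
theorem stmt_2 (N : ℕ) (M : Set (EuclideanSpace ℂ (Fin N)))
    (hOpen : IsOpen M) (hConn : IsConnected M) (hBdd : Bornology.IsBounded M)
    (f : EuclideanSpace ℂ (Fin N) → EuclideanSpace ℂ (Fin N))
    (hMaps : Set.MapsTo f M M) (hHol : DifferentiableOn ℂ f M)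
    (hStrict : ∃ ε > (0 : ℝ), Metric.thickening ε (f '' M) ⊆ M) :
    ∃ x₀ ∈ M, f x₀ = x₀ ∧
      (∀ m : ℕ, 1 ≤ m → ∀ x ∈ M, (f^[m] x = x ↔ x = x₀)) ∧
      {m : ℕ | 1 ≤ m ∧ ∃ x ∈ M, f^[m] x = x ∧
        ∀ k : ℕ, 1 ≤ k → k < m → f^[k] x ≠ x} = {1} := by
  obtain ⟨x₀, hx₀, hfix, hper⟩ :=
    exists_isFixedPt_forall_isPeriodicPt_eq hOpen hConn hBdd hMaps hHol hStrict
  refine ⟨x₀, hx₀, hfix, fun m hm y hy => ⟨hper m hm y hy, fun h => h ▸ hfix.iterate m⟩, ?_⟩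
  ext m
  refine ⟨fun ⟨hm, y, hy, hy', hmin⟩ => ?_, fun hm => ?_⟩
  · by_contra hm1
    rw [mem_singleton_iff] at hm1
    exact hmin 1 le_rfl (by omega) (by rw [hper m hm y hy hy']; exact hfix)
  · rw [mem_singleton_iff.1 hm]
    exact ⟨le_rfl, x₀, hx₀, hfix, fun k hk hk1 => by omega⟩
end

section
/- Let λ₁, …, λₙ be complex numbers ordered so that |λ₁| ≥ |λⱼ| for all 1 ≤ j ≤ n, and suppose |λ₁| > 1. Then there exists a positive integer m such that Re(λ₁^m + ⋯ + λₙ^m) > 1; in particular 1 − (λ₁^m + ⋯ + λₙ^m) has negative real part. -/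
/-!
Write `λⱼ = |λⱼ| uⱼ` with `uⱼ` on the unit circle. In the compact group of families of
unit complex numbers, `1` is a cluster point of the powers of `(uⱼ)ⱼ`, so for infinitely
many `m` every `uⱼ ^ m` has real part `> 1/2`. For such `m` every `Re λⱼ^m` is nonnegative and
`Re λ₁^m > |λ₁|^m / 2`, which exceeds `1` once `m` is large.
-/

open Filter Topology

theorem Circle.frequently_forall_lt_re_pow {ι : Type*} [Finite ι] (u : ι → Circle) {c : ℝ}
    (hc : c < 1) : ∃ᶠ m in atTop, ∀ j, c < ((u j ^ m : Circle) : ℂ).re := by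
  have hU : ∀ᶠ v in 𝓝 (1 : ι → Circle), ∀ j, c < ((v j : Circle) : ℂ).re := by
    refine eventually_all.2 fun j => ?_
    have hcont : Continuous fun v : ι → Circle => ((v j : Circle) : ℂ).re := by fun_prop
    exact hcont.continuousAt.eventually_const_lt (by simpa using hc)
  exact (mapClusterPt_one_atTop_pow u).frequently hU

theorem Complex.frequently_forall_mul_norm_pow_le_re_pow {ι : Type*} [Finite ι] (z : ι → ℂ)
    {c : ℝ} (hc : c < 1) : ∃ᶠ m in atTop, ∀ j, c * ‖z j‖ ^ m ≤ (z j ^ m).re := by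
  refine (Circle.frequently_forall_lt_re_pow (fun j => Circle.exp (z j).arg) hc).mono
    fun m hm j => ?_
  have hz : z j ^ m =
      ((‖z j‖ ^ m : ℝ) : ℂ) * ((Circle.exp (z j).arg ^ m : Circle) : ℂ) := by
    rw [Circle.coe_pow, Circle.coe_exp, Complex.ofReal_pow, ← mul_pow,
      Complex.norm_mul_exp_arg_mul_I]
  rw [hz, Complex.re_ofReal_mul, mul_comm]
  exact mul_le_mul_of_nonneg_left (hm j).le (by positivity)

theorem stmt_4_general (n : ℕ) (hn : 0 < n) (lam : Fin n → ℂ)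
    (hbig : 1 < ‖lam ⟨0, hn⟩‖) :
    ∃ m : ℕ, 0 < m ∧ 1 < (∑ j, (lam j) ^ m).re ∧
      ((1 : ℂ) - ∑ j, (lam j) ^ m).re < 0 := by
  set r := ‖lam ⟨0, hn⟩‖
  have hlarge : ∀ᶠ m in atTop, 2 < r ^ m ∧ 0 < m :=
    ((tendsto_pow_atTop_atTop_of_one_lt hbig).eventually_gt_atTop 2).and (eventually_gt_atTop 0)
  obtain ⟨m, hre, hrm, hm⟩ := ((Complex.frequently_forall_mul_norm_pow_le_re_pow lam
    (c := 1 / 2) (by norm_num)).and_eventually hlarge).exists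
  have hfirst_le_sum : (lam ⟨0, hn⟩ ^ m).re ≤ (∑ j, lam j ^ m).re := by
    rw [Complex.re_sum]
    refine Finset.single_le_sum (f := fun j => (lam j ^ m).re) (fun j _ => ?_) (Finset.mem_univ _)
    exact (mul_nonneg (by norm_num) (by positivity)).trans (hre j)
  have hsum : 1 < (∑ j, lam j ^ m).re := by linarith [hre ⟨0, hn⟩]
  exact ⟨m, hm, hsum, by simpa using hsum⟩

/-- If λ₁, …, λₙ are complex numbers with |λ₁| ≥ |λⱼ| for all j and |λ₁| > 1,
then there is a positive integer m with Re(λ₁^m + ⋯ + λₙ^m) > 1; in particular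
1 − (λ₁^m + ⋯ + λₙ^m) has negative real part. -/
theorem stmt_4 (n : ℕ) (hn : 0 < n) (lam : Fin n → ℂ)
    (hmax : ∀ j, ‖lam j‖ ≤ ‖lam ⟨0, hn⟩‖)
    (hbig : 1 < ‖lam ⟨0, hn⟩‖) :
    ∃ m : ℕ, 0 < m ∧ 1 < (∑ j, (lam j) ^ m).re ∧
      ((1 : ℂ) - ∑ j, (lam j) ^ m).re < 0 :=
  stmt_4_general n hn lam hbig
end

section
/- Let λ₁, …, λₙ be complex numbers with 0 < |λ₁| < 1 and |λⱼ| ≤ |λ₁| for all 1 ≤ j ≤ n. Then there exists a positive integer m such that the complex number λ₁^m + ⋯ + λₙ^m is not an integer (i.e. it is not the image of any integer under the canonical embedding ℤ → ℂ); indeed one can choose m so that |λ₁^m + ⋯ + λₙ^m| < 1 and Re(λ₁^m + ⋯ + λₙ^m) ≠ 0. -/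
/-!
All power sums `∑ λⱼ^m` tend to `0`, so their modulus is eventually below `1`. Their real parts
cannot vanish for all large `m`: together with the conjugate family this would make the power sums
of the `2n` numbers `λⱼ, conj λⱼ` vanish for all large `m`, and grouping equal values this is a
vanishing combination of the sequences `m ↦ μ^m`, which are linearly independent (Artin's
independence of characters of the monoid `ℕ`), while the coefficient of `μ = λ₁ ≠ 0` is not zero.
An integer of modulus `< 1` is `0`, whose real part is `0`.
-/

open Filter Topology Finset

theorem linearIndependent_fun_pow (K : Type*) [CommRing K] [IsDomain K] :
    LinearIndependent K (fun μ : K => fun k : ℕ => μ ^ k) :=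
  (linearIndependent_monoidHom (Multiplicative ℕ) K).comp (powersHom K) (powersHom K).injective

theorem frequently_sum_pow_ne_zero {K ι : Type*} [CommRing K] [IsDomain K] [CharZero K]
    [Fintype ι] (ν : ι → K) {i₀ : ι} (h₀ : ν i₀ ≠ 0) :
    ∃ᶠ m in atTop, ∑ i, ν i ^ m ≠ 0 := by
  classical
  refine frequently_atTop.mpr fun M => ?_
  by_contra! hzero
  set c : K → K := fun μ => (#{i | ν i = μ} : K) * μ ^ M
  have hcomb : ∑ μ ∈ univ.image ν, c μ • (fun k : ℕ => μ ^ k) = 0 := by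
    funext k
    simp only [Finset.sum_apply, Pi.smul_apply, smul_eq_mul, Pi.zero_apply, c, mul_assoc, ← pow_add]
    rw [← hzero (M + k) (Nat.le_add_right M k), Finset.sum_comp (fun μ => μ ^ (M + k)) ν]
    simp only [nsmul_eq_mul]
  have hc := linearIndependent_iff'.mp (linearIndependent_fun_pow K) _ c hcomb (ν i₀)
    (mem_image_of_mem ν (mem_univ i₀))
  have hcard : #{i | ν i = ν i₀} ≠ 0 := card_ne_zero_of_mem (a := i₀) (by simp)
  simp [c, hcard, h₀] at hc

theorem frequently_re_sum_pow_ne_zero {ι : Type*} [Fintype ι] (lam : ι → ℂ) {i₀ : ι}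
    (h₀ : lam i₀ ≠ 0) : ∃ᶠ m in atTop, (∑ i, lam i ^ m).re ≠ 0 := by
  -- `λ^m + conj λ^m = 2 Re λ^m`
  refine (frequently_sum_pow_ne_zero (Sum.elim lam (starRingEnd ℂ ∘ lam)) (i₀ := .inl i₀) h₀).mono
    fun m hm hre => hm ?_
  simp [Fintype.sum_sum_type, ← map_pow, ← map_sum, Complex.add_conj, hre]

theorem Complex.not_exists_intCast_eq_of_norm_lt_one {z : ℂ} (h₁ : ‖z‖ < 1) (h₂ : z ≠ 0) :
    ¬ ∃ k : ℤ, z = k := by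
  rintro ⟨k, rfl⟩
  rw [Complex.norm_intCast, ← Int.cast_abs, ← Int.cast_one, Int.cast_lt, Int.abs_lt_one_iff] at h₁
  simp [h₁] at h₂

/-- If λ₁, …, λₙ are complex numbers with 0 < |λ₁| < 1 and |λⱼ| ≤ |λ₁| for all
j, then there is a positive integer m with |λ₁^m + ⋯ + λₙ^m| < 1 and
Re(λ₁^m + ⋯ + λₙ^m) ≠ 0; in particular λ₁^m + ⋯ + λₙ^m is not an integer. -/
theorem stmt_5 (n : ℕ) (hn : 0 < n) (lam : Fin n → ℂ)
    (hpos : 0 < ‖lam ⟨0, hn⟩‖)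
    (hlt : ‖lam ⟨0, hn⟩‖ < 1)
    (hmax : ∀ j, ‖lam j‖ ≤ ‖lam ⟨0, hn⟩‖) :
    ∃ m : ℕ, 0 < m ∧ ‖∑ j, (lam j) ^ m‖ < 1 ∧
      (∑ j, (lam j) ^ m).re ≠ 0 ∧
      ¬ ∃ k : ℤ, (∑ j, (lam j) ^ m) = (k : ℂ) := by
  have hsum : Tendsto (fun m => ∑ j, lam j ^ m) atTop (𝓝 0) := by
    simpa using tendsto_finsetSum univ fun j _ =>
      tendsto_pow_atTop_nhds_zero_of_norm_lt_one ((hmax j).trans_lt hlt)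
  have hsmall : ∀ᶠ m in atTop, ‖∑ j, lam j ^ m‖ < 1 :=
    (tendsto_zero_iff_norm_tendsto_zero.mp hsum).eventually (gt_mem_nhds zero_lt_one)
  obtain ⟨m, ⟨hm, hnorm⟩, hre⟩ := ((eventually_gt_atTop 0).and hsmall).and_frequently
    (frequently_re_sum_pow_ne_zero lam (norm_pos_iff.mp hpos)) |>.exists
  exact ⟨m, hm, hnorm, hre, Complex.not_exists_intCast_eq_of_norm_lt_one hnorm
    fun h => hre (by simp [h])⟩
end

section
/- Let A be an n × n matrix with integer entries all of whose complex eigenvalues have modulus strictly less than 1. Then every eigenvalue of A is 0; equivalently, the characteristic polynomial of A is xⁿ and A is nilpotent. -/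
/-!
The characteristic polynomial `p` of `A` is monic with integer coefficients, so its constant
coefficient is an integer equal, up to sign, to the product of its complex roots. If all roots
lie in the open unit disc and `deg p > 0`, this product has modulus `< 1`, so the constant
coefficient vanishes and `p = X * r` with `r` again monic, integral and with roots in the disc.
Induction on the degree gives `p = Xⁿ`, and Cayley–Hamilton then gives `Aⁿ = 0`.
-/

open Polynomial

theorem Multiset.prod_map_lt_one {α : Type*} {s : Multiset α} {f : α → ℝ} (hs : s ≠ 0)
    (h0 : ∀ a ∈ s, 0 ≤ f a) (h1 : ∀ a ∈ s, f a < 1) : (s.map f).prod < 1 := by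
  obtain ⟨a, ha⟩ := Multiset.exists_mem_of_ne_zero hs
  obtain ⟨t, rfl⟩ := Multiset.exists_cons_of_mem ha
  have ht : (t.map f).prod ≤ 1 := by
    simpa using Multiset.prod_map_le_prod_map₀ f 1 (fun b hb => h0 b (mem_cons_of_mem hb))
      (fun b hb => (h1 b (mem_cons_of_mem hb)).le)
  calc (map f (a ::ₘ t)).prod = f a * (t.map f).prod := by rw [map_cons, prod_cons]
    _ ≤ f a := mul_le_of_le_one_right (h0 a ha) ht
    _ < 1 := h1 a ha

namespace Polynomial

theorem norm_coeff_zero_lt_one_of_roots_norm_lt_one {p : ℂ[X]} (hp : p.Monic)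
    (hdeg : p.natDegree ≠ 0) (h : ∀ z, p.IsRoot z → ‖z‖ < 1) : ‖p.coeff 0‖ < 1 := by
  have hsplit : p.Splits := IsAlgClosed.splits p
  have hroots : p.roots ≠ 0 := by
    rwa [← Multiset.card_pos, ← hsplit.natDegree_eq_card_roots, Nat.pos_iff_ne_zero]
  rw [hsplit.coeff_zero_eq_prod_roots_of_monic hp, norm_mul, norm_pow, norm_neg, norm_one,
    one_pow, one_mul, ← normHom_apply, map_multiset_prod]
  exact Multiset.prod_map_lt_one hroots (fun z _ => norm_nonneg z)
    (fun z hz => h z (isRoot_of_mem_roots hz))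

theorem coeff_zero_eq_zero_of_roots_norm_lt_one {p : ℤ[X]} (hp : p.Monic)
    (hdeg : p.natDegree ≠ 0)
    (h : ∀ z : ℂ, (p.map (Int.castRingHom ℂ)).IsRoot z → ‖z‖ < 1) : p.coeff 0 = 0 := by
  have hnorm := norm_coeff_zero_lt_one_of_roots_norm_lt_one (hp.map (Int.castRingHom ℂ))
    (by rwa [natDegree_map_eq_of_injective Int.cast_injective]) h
  rw [coeff_map, eq_intCast, Complex.norm_intCast, ← Int.cast_abs] at hnorm
  exact Int.abs_lt_one_iff.mp (by exact_mod_cast hnorm)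

theorem eq_X_pow_of_roots_norm_lt_one {p : ℤ[X]} (hp : p.Monic)
    (h : ∀ z : ℂ, (p.map (Int.castRingHom ℂ)).IsRoot z → ‖z‖ < 1) : p = X ^ p.natDegree := by
  induction hn : p.natDegree generalizing p with
  | zero => rw [pow_zero, ← hp.natDegree_eq_zero, hn]
  | succ k ih =>
    obtain ⟨r, rfl⟩ : X ∣ p :=
      X_dvd_iff.mpr (coeff_zero_eq_zero_of_roots_norm_lt_one hp (by omega) h)
    have hr : r.Monic := monic_X.of_mul_monic_left hp
    have hrk : r.natDegree = k := by
      rw [natDegree_mul X_ne_zero hr.ne_zero, natDegree_X] at hn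
      omega
    have hroots : ∀ z : ℂ, (r.map (Int.castRingHom ℂ)).IsRoot z → ‖z‖ < 1 := fun z hz =>
      h z (by simp [hz.eq_zero])
    rw [ih hr hroots hrk, pow_succ']

end Polynomial

theorem Matrix.isNilpotent_of_charpoly_eq_X_pow {n R : Type*} [Fintype n] [DecidableEq n]
    [CommRing R] {A : Matrix n n R} {k : ℕ} (hA : A.charpoly = X ^ k) : IsNilpotent A :=
  ⟨k, by simpa [hA] using A.aeval_self_charpoly⟩

/-- An integer matrix all of whose complex eigenvalues have modulus < 1 has all
eigenvalues 0: its characteristic polynomial is Xⁿ and it is nilpotent. -/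
theorem stmt_6 (n : ℕ) (A : Matrix (Fin n) (Fin n) ℤ)
    (h : ∀ z : ℂ, ((A.map (Int.cast : ℤ → ℂ)).charpoly).IsRoot z →
      ‖z‖ < 1) :
    (∀ z : ℂ, ((A.map (Int.cast : ℤ → ℂ)).charpoly).IsRoot z → z = 0) ∧
      A.charpoly = Polynomial.X ^ n ∧ IsNilpotent A := by
  have hmap : (A.map (Int.cast : ℤ → ℂ)).charpoly = A.charpoly.map (Int.castRingHom ℂ) :=
    A.charpoly_map (Int.castRingHom ℂ)
  have hX : A.charpoly = X ^ n := by
    have := eq_X_pow_of_roots_norm_lt_one A.charpoly_monic (hmap ▸ h)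
    rwa [A.charpoly_natDegree_eq_dim, Fintype.card_fin] at this
  refine ⟨fun z hz => ?_, hX, Matrix.isNilpotent_of_charpoly_eq_X_pow hX⟩
  rw [hmap, hX, Polynomial.map_pow, map_X, IsRoot, eval_pow, eval_X] at hz
  exact eq_zero_of_pow_eq_zero hz
end

section
/- Let k ≥ 2 and let λ₁, …, λₙ be complex numbers with |λ₁| = ⋯ = |λ_k| = 1 and |λⱼ| < 1 for k < j ≤ n. Then there exists a positive integer m such that Re(λ₁^m + ⋯ + λₙ^m) > 1; in particular 1 − (λ₁^m + ⋯ + λₙ^m) has negative real part. -/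
/-!
The powers of the unimodular `λⱼ` form a sequence in the compact group `Circleᵏ`, so they return
simultaneously arbitrarily close to `1` for arbitrarily large exponents, while the powers of the
other `λⱼ` tend to `0`. Hence the number of unimodular `λⱼ`, which is at least `k ≥ 2`, is a cluster
point of the power sums `λ₁^m + ⋯ + λₙ^m`.
-/

open Filter Topology Finset

theorem MapClusterPt.prodMk_of_tendsto {α X Y : Type*} [TopologicalSpace X] [TopologicalSpace Y]
    {F : Filter α} {u : α → X} {v : α → Y} {x : X} {y : Y}
    (hu : MapClusterPt x F u) (hv : Tendsto v F (𝓝 y)) :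
    MapClusterPt (x, y) F (fun a => (u a, v a)) := by
  rw [((𝓝 x).basis_sets.prod_nhds (𝓝 y).basis_sets).mapClusterPt_iff_frequently]
  rintro ⟨s, t⟩ ⟨hs, ht⟩
  exact (mapClusterPt_iff_frequently.1 hu s hs).and_eventually (hv ht)

theorem mapClusterPt_one_atTop_pow_of_norm_eq_one {ι : Type*} {μ : ι → ℂ}
    (hμ : ∀ j, ‖μ j‖ = 1) : MapClusterPt 1 atTop (fun m j => μ j ^ m) := by
  let w : ι → Circle := fun j => ⟨μ j, mem_sphere_zero_iff_norm.2 (hμ j)⟩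
  have hcoe : Continuous fun v : ι → Circle => fun j => (v j : ℂ) := by fun_prop
  convert (mapClusterPt_one_atTop_pow w).continuousAt_comp hcoe.continuousAt using 1
  · funext j; simp
  · rfl

theorem mapClusterPt_card_atTop_sum_pow {ι : Type*} [Fintype ι] {z : ι → ℂ}
    (hz : ∀ j, ‖z j‖ ≤ 1) :
    MapClusterPt (#{j | ‖z j‖ = 1} : ℂ) atTop (fun m => ∑ j, z j ^ m) := by
  classical
  let p : ι → Prop := fun j => ‖z j‖ = 1
  have hhead : MapClusterPt (#{j | p j} : ℂ) atTop (fun m => ∑ j : Subtype p, z j ^ m) := by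
    have := (mapClusterPt_one_atTop_pow_of_norm_eq_one (μ := fun j : Subtype p => z j)
      (fun j => j.2)).continuousAt_comp (f := fun v : Subtype p → ℂ => ∑ j, v j) (by fun_prop)
    simpa [Function.comp_def, Fintype.card_subtype] using this
  have htail : Tendsto (fun m => ∑ j : {j // ¬ p j}, z j ^ m) atTop (𝓝 0) := by
    simpa using tendsto_finsetSum (univ : Finset {j // ¬ p j}) fun j _ =>
      tendsto_pow_atTop_nhds_zero_of_norm_lt_one ((hz j).lt_of_ne j.2)
  have := (hhead.prodMk_of_tendsto htail).continuousAt_comp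
    (f := fun q : ℂ × ℂ => q.1 + q.2) (by fun_prop)
  rw [← funext fun m => Fintype.sum_subtype_add_sum_subtype p fun j => z j ^ m]
  simpa only [Function.comp_def, add_zero] using this

/-- Let k ≥ 2 and λ₁, …, λₙ be complex numbers with |λⱼ| = 1 for j ≤ k and
|λⱼ| < 1 for j > k. Then there is a positive integer m with
Re(λ₁^m + ⋯ + λₙ^m) > 1; in particular 1 − (λ₁^m + ⋯ + λₙ^m) has negative
real part. -/
theorem stmt_7 (n k : ℕ) (hk : 2 ≤ k) (hkn : k ≤ n) (lam : Fin n → ℂ)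
    (h1 : ∀ j : Fin n, (j : ℕ) < k → ‖lam j‖ = 1)
    (h2 : ∀ j : Fin n, k ≤ (j : ℕ) → ‖lam j‖ < 1) :
    ∃ m : ℕ, 0 < m ∧ 1 < (∑ j, (lam j) ^ m).re ∧
      ((1 : ℂ) - ∑ j, (lam j) ^ m).re < 0 := by
  have hle : ∀ j, ‖lam j‖ ≤ 1 := fun j =>
    if hj : (j : ℕ) < k then (h1 j hj).le else (h2 j (not_lt.1 hj)).le
  have hcard : k ≤ #{j | ‖lam j‖ = 1} := by
    simpa using card_le_card_of_injOn (s := univ) (Fin.castLE hkn)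
      (fun j _ => by simpa using h1 _ j.2) (Fin.castLE_injective hkn).injOn
  have hnhds : ∀ᶠ w in 𝓝 (#{j | ‖lam j‖ = 1} : ℂ), 1 < w.re :=
    (isOpen_lt continuous_const Complex.continuous_re).eventually_mem (by simp; omega)
  obtain ⟨m, hre, hm⟩ :=
    ((mapClusterPt_card_atTop_sum_pow hle).frequently hnhds).and_eventually
      (eventually_gt_atTop 0) |>.exists
  exact ⟨m, hm, hre, by rw [Complex.sub_re, Complex.one_re]; linarith⟩
end

section
/- Let A be an n × n matrix with integer entries such that trace(A^m) ≤ 1 for every integer m ≥ 1. Then exactly one of the following holds: (i) all complex eigenvalues of A are 0 (so the characteristic polynomial of A is xⁿ); (ii) the complex eigenvalues of A are 1 with multiplicity one and 0 with multiplicity n − 1 (characteristic polynomial x^{n−1}(x − 1)); (iii) the complex eigenvalues of A are −1 with multiplicity one and 0 with multiplicity n − 1 (characteristic polynomial x^{n−1}(x + 1)). -/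
open Polynomial Module

/-!
Let `Λ` be the multiset of complex eigenvalues of `A`, so that `Re (∑ λ ∈ Λ, λ ^ m) ≤ 1` for all
`m ≥ 1`. By Dirichlet's simultaneous approximation theorem there are arbitrarily large `d` for which
every `λ ^ d` points within a small angle of the positive real axis, so that
`(3/4) ∑ |λ| ^ d ≤ Re ∑ λ ^ d ≤ 1`. Letting `d → ∞` gives `|λ| ≤ 1` for all `λ`. The product of the
nonzero eigenvalues is, up to sign, the lowest nonzero coefficient of the integer characteristic
polynomial, so it has absolute value at least `1`; hence every nonzero eigenvalue has `|λ| = 1`, and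
then `(3/4) · #{λ ≠ 0} ≤ 1` leaves at most one of them. That one is minus an integer coefficient,
so it is `±1`.
-/

theorem LinearMap.trace_pow_eq_of_isNilpotent_sub_algebraMap {R M : Type*} [CommRing R]
    [IsReduced R] [AddCommGroup M] [Module R M] [Module.Free R M] [Module.Finite R M]
    {g : End R M} (μ : R) (hg : IsNilpotent (g - algebraMap R _ μ)) (m : ℕ) :
    LinearMap.trace R M (g ^ m) = μ ^ m * finrank R M := by
  induction m with
  | zero => simp
  | succ m ih =>
    rw [pow_succ, End.mul_eq_comp,
      trace_comp_eq_mul_of_commute_of_isNilpotent μ ((Commute.refl g).pow_left m) hg, ih, pow_succ]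
    ring

theorem Module.End.trace_pow_eq_sum_roots_charpoly {K V : Type*} [Field K] [IsAlgClosed K]
    [AddCommGroup V] [Module K V] [FiniteDimensional K V] (f : End K V) (m : ℕ) :
    LinearMap.trace K V (f ^ m) = (f.charpoly.roots.map (· ^ m)).sum := by
  classical
  have hmaps : ∀ μ, Set.MapsTo (f ^ m) (f.maxGenEigenspace μ) (f.maxGenEigenspace μ) :=
    f.mapsTo_maxGenEigenspace_of_comm ((Commute.refl f).pow_right m)
  have hfin : {μ | f.maxGenEigenspace μ ≠ ⊥}.Finite :=
    WellFoundedGT.finite_ne_bot_of_iSupIndep f.independent_maxGenEigenspace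
  have hsupport : hfin.toFinset = f.charpoly.roots.toFinset := by
    ext μ
    simp [← Submodule.finrank_eq_zero, LinearMap.finrank_maxGenEigenspace_eq,
      f.charpoly_monic.ne_zero]
  have hinternal := DirectSum.isInternal_submodule_of_iSupIndep_of_iSup_eq_top
    f.independent_maxGenEigenspace f.iSup_maxGenEigenspace_eq_top
  rw [LinearMap.trace_eq_sum_trace_restrict' hinternal hfin hmaps, Finset.sum_multiset_map_count,
    hsupport]
  refine Finset.sum_congr rfl fun μ _ => ?_
  rw [← Module.End.pow_restrict m (f.mapsTo_maxGenEigenspace_of_comm rfl μ),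
    LinearMap.trace_pow_eq_of_isNilpotent_sub_algebraMap μ
      (f.isNilpotent_restrict_maxGenEigenspace_sub_algebraMap μ),
    LinearMap.finrank_maxGenEigenspace_eq, count_roots, nsmul_eq_mul, mul_comm]

theorem Matrix.trace_pow_eq_sum_roots_charpoly {K n : Type*} [Field K] [IsAlgClosed K] [Fintype n]
    [DecidableEq n] (A : Matrix n n K) (m : ℕ) :
    (A ^ m).trace = (A.charpoly.roots.map (· ^ m)).sum := by
  rw [← Matrix.trace_toLin'_eq, Matrix.toLin'_pow, Module.End.trace_pow_eq_sum_roots_charpoly,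
    Matrix.charpoly_toLin']

theorem exists_pow_norm_sub_one_lt {ι : Type*} [Fintype ι] (u : ι → ℂ) (hu : ∀ i, ‖u i‖ = 1)
    {ε : ℝ} (hε : 0 < ε) (N : ℕ) : ∃ d, N ≤ d ∧ ∀ i, ‖u i ^ d - 1‖ < ε := by
  set x : ℕ → ι → ℂ := fun t i => u i ^ t
  have hmem : ∀ t, x t ∈ Set.univ.pi fun _ => Metric.sphere (0 : ℂ) 1 :=
    fun t i _ => by simp [x, hu]
  obtain ⟨_, -, φ, hφ, hlim⟩ :=
    (isCompact_univ_pi fun _ => isCompact_sphere (0 : ℂ) 1).tendsto_subseq hmem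
  obtain ⟨k, hk⟩ := Metric.cauchySeq_iff'.mp hlim.cauchySeq ε hε
  refine ⟨φ (N + k) - φ k, ?_, fun i => ?_⟩
  · have := hφ.add_le_nat N k
    omega
  have hsplit : u i ^ φ (N + k) - u i ^ φ k = u i ^ φ k * (u i ^ (φ (N + k) - φ k) - 1) := by
    rw [mul_sub, ← pow_add, Nat.add_sub_cancel' (hφ.monotone (Nat.le_add_left k N)), mul_one]
  calc ‖u i ^ (φ (N + k) - φ k) - 1‖ = ‖x (φ (N + k)) i - x (φ k) i‖ := by
        rw [hsplit, norm_mul, norm_pow, hu, one_pow, one_mul]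
    _ ≤ dist (x (φ (N + k))) (x (φ k)) := by
        rw [← dist_eq_norm]; exact dist_le_pi_dist _ _ i
    _ < ε := hk _ (Nat.le_add_left k N)

theorem exists_mul_norm_pow_le_re_pow (s : Finset ℂ) {ε : ℝ} (hε : 0 < ε) (N : ℕ) :
    ∃ d, N ≤ d ∧ ∀ z ∈ s, (1 - ε) * ‖z‖ ^ d ≤ (z ^ d).re := by
  obtain ⟨d, hNd, hd⟩ := exists_pow_norm_sub_one_lt
    (fun z : s => Complex.exp (Complex.arg z * Complex.I))
    (fun _ => Complex.norm_exp_ofReal_mul_I _) hε N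
  refine ⟨d, hNd, fun z hz => ?_⟩
  set u := Complex.exp (Complex.arg z * Complex.I)
  have hu : 1 - ε ≤ (u ^ d).re := by
    have := (Complex.re_le_norm (1 - u ^ d)).trans (norm_sub_rev (u ^ d) 1 ▸ hd ⟨z, hz⟩).le
    simp only [Complex.sub_re, Complex.one_re] at this
    linarith
  calc (1 - ε) * ‖z‖ ^ d ≤ (u ^ d).re * ‖z‖ ^ d := by gcongr
    _ = (z ^ d).re := by
      conv_rhs => rw [← Complex.norm_mul_exp_arg_mul_I z]
      rw [mul_pow, ← Complex.ofReal_pow, Complex.re_ofReal_mul, mul_comm]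

theorem Multiset.exists_sum_norm_pow_le_of_re_sum_pow_le_one {Λ : Multiset ℂ}
    (hΛ : ∀ m, 1 ≤ m → (Λ.map (· ^ m)).sum.re ≤ 1) (N : ℕ) :
    ∃ d, N ≤ d ∧ 3 / 4 * (Λ.map (‖·‖ ^ d)).sum ≤ 1 := by
  obtain ⟨d, hNd, hd⟩ := exists_mul_norm_pow_le_re_pow Λ.toFinset (ε := 1 / 4) (by norm_num) (N + 1)
  refine ⟨d, by omega, ?_⟩
  calc 3 / 4 * (Λ.map (‖·‖ ^ d)).sum = (Λ.map fun z => 3 / 4 * ‖z‖ ^ d).sum := by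
        rw [Multiset.sum_map_mul_left]
    _ ≤ (Λ.map fun z => (z ^ d).re).sum :=
        Multiset.sum_map_le_sum_map _ _ fun z hz => by
          have := hd z (Multiset.mem_toFinset.2 hz); norm_num at this ⊢; linarith
    _ = (Λ.map (· ^ d)).sum.re :=
        ((map_multiset_sum Complex.reAddGroupHom _).trans (by rw [Multiset.map_map]; rfl)).symm
    _ ≤ 1 := hΛ d (by omega)

theorem Multiset.norm_le_one_of_re_sum_pow_le_one {Λ : Multiset ℂ}
    (hΛ : ∀ m, 1 ≤ m → (Λ.map (· ^ m)).sum.re ≤ 1) {z : ℂ} (hz : z ∈ Λ) : ‖z‖ ≤ 1 := by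
  by_contra! hz1
  obtain ⟨N, hN⟩ := pow_unbounded_of_one_lt 2 hz1
  obtain ⟨d, hNd, hd⟩ := Λ.exists_sum_norm_pow_le_of_re_sum_pow_le_one hΛ N
  have hzd : ‖z‖ ^ d ≤ (Λ.map (‖·‖ ^ d)).sum :=
    Multiset.single_le_sum (fun _ hx => by obtain ⟨w, -, rfl⟩ := Multiset.mem_map.1 hx; positivity)
      _ (Multiset.mem_map_of_mem _ hz)
  have := pow_le_pow_right₀ hz1.le hNd
  linarith

theorem Multiset.card_filter_ne_zero_le_one_of_re_sum_pow_le_one {Λ : Multiset ℂ}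
    (hΛ : ∀ m, 1 ≤ m → (Λ.map (· ^ m)).sum.re ≤ 1) (hunit : ∀ z ∈ Λ, z ≠ 0 → ‖z‖ = 1) :
    (Λ.filter (· ≠ 0)).card ≤ 1 := by
  obtain ⟨d, -, hd⟩ := Λ.exists_sum_norm_pow_le_of_re_sum_pow_le_one hΛ 0
  have hnonzero : ((Λ.filter (· ≠ 0)).map (‖·‖ ^ d)).sum = (Λ.filter (· ≠ 0)).card := by
    rw [Multiset.map_congr (g := fun _ => (1 : ℝ)) rfl fun z hz => by
      rw [Multiset.mem_filter] at hz; rw [hunit z hz.1 hz.2, one_pow]]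
    simp
  have hzero : 0 ≤ ((Λ.filter (¬ · ≠ 0)).map (‖·‖ ^ d)).sum :=
    Multiset.sum_nonneg fun _ hx => by obtain ⟨w, -, rfl⟩ := Multiset.mem_map.1 hx; positivity
  rw [← Multiset.filter_add_not (· ≠ 0) Λ, Multiset.map_add, Multiset.sum_add, hnonzero] at hd
  have : ((Λ.filter (· ≠ 0)).card : ℝ) < 2 := by linarith
  exact Nat.lt_succ_iff.1 (by exact_mod_cast this)

theorem Multiset.eq_one_of_one_le_prod_map {ι R : Type*} [CommMonoidWithZero R] [PartialOrder R]
    [ZeroLEOneClass R] [PosMulMono R] {s : Multiset ι} {f : ι → R} (h0 : ∀ i ∈ s, 0 ≤ f i)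
    (h1 : ∀ i ∈ s, f i ≤ 1) (hprod : 1 ≤ (s.map f).prod) {i : ι} (hi : i ∈ s) : f i = 1 := by
  obtain ⟨t, rfl⟩ := exists_cons_of_mem hi
  have ht : (t.map f).prod ≤ 1 := by
    simpa using Multiset.prod_map_le_prod_map₀ f 1 (fun j hj => h0 j (mem_cons_of_mem hj))
      (fun j hj => h1 j (mem_cons_of_mem hj))
  refine le_antisymm (h1 i hi) ?_
  calc 1 ≤ f i * (t.map f).prod := by simpa using hprod
    _ ≤ f i * 1 := mul_le_mul_of_nonneg_left ht (h0 i hi)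
    _ = f i := mul_one _

theorem Polynomial.trailingCoeff_multiset_prod {R : Type*} [CommSemiring R] [NoZeroDivisors R]
    (s : Multiset R[X]) : s.prod.trailingCoeff = (s.map trailingCoeff).prod := by
  induction s using Multiset.induction_on with
  | empty => simp [trailingCoeff]
  | cons p s ih => simp [trailingCoeff_mul, ih]

theorem Polynomial.trailingCoeff_X_sub_C_of_ne_zero {R : Type*} [Ring R] {z : R} (hz : z ≠ 0) :
    (X - C z).trailingCoeff = -z := by
  rw [trailingCoeff_eq_coeff_zero] <;> simp [hz]

theorem Polynomial.one_le_norm_trailingCoeff_map_intCast {P : ℤ[X]} (hP : P ≠ 0) :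
    1 ≤ ‖(P.map (Int.castRingHom ℂ)).trailingCoeff‖ := by
  have hne : P.map (Int.castRingHom ℂ) ≠ 0 := (Polynomial.map_ne_zero_iff Int.cast_injective).2 hP
  set j := (P.map (Int.castRingHom ℂ)).natTrailingDegree
  have hcoeff : (P.map (Int.castRingHom ℂ)).trailingCoeff = (P.coeff j : ℂ) := coeff_map _ _
  have hcj : P.coeff j ≠ 0 := by
    intro h0
    exact trailingCoeff_nonzero_iff_nonzero.2 hne (by rw [hcoeff, h0, Int.cast_zero])
  rw [hcoeff, Complex.norm_intCast]
  exact_mod_cast Int.one_le_abs hcj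

theorem Polynomial.norm_eq_one_of_mem_roots_map_intCast {P : ℤ[X]} (hP : P.Monic)
    (hle : ∀ z ∈ (P.map (Int.castRingHom ℂ)).roots, ‖z‖ ≤ 1) {z : ℂ}
    (hz : z ∈ (P.map (Int.castRingHom ℂ)).roots) (hz0 : z ≠ 0) : ‖z‖ = 1 := by
  set p := P.map (Int.castRingHom ℂ)
  have hprod : ‖p.trailingCoeff‖ = (p.roots.map fun w => ‖(X - C w).trailingCoeff‖).prod := by
    conv_lhs => rw [(IsAlgClosed.splits p).eq_prod_roots_of_monic (hP.map _)]
    rw [trailingCoeff_multiset_prod, Multiset.map_map]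
    exact (map_multiset_prod (normHom (α := ℂ)) _).trans (by rw [Multiset.map_map]; rfl)
  have hfactor_le : ∀ w ∈ p.roots, ‖(X - C w).trailingCoeff‖ ≤ 1 := by
    intro w hw
    rcases eq_or_ne w 0 with rfl | hw0
    · simp [trailingCoeff, natTrailingDegree_X]
    · simpa [trailingCoeff_X_sub_C_of_ne_zero hw0] using hle w hw
  simpa [trailingCoeff_X_sub_C_of_ne_zero hz0] using
    Multiset.eq_one_of_one_le_prod_map (fun w _ => norm_nonneg _) hfactor_le
      (hprod ▸ one_le_norm_trailingCoeff_map_intCast hP.ne_zero) hz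

theorem Multiset.eq_replicate_zero_or_eq_cons_replicate_zero {α : Type*} [Zero α] [DecidableEq α]
    {s : Multiset α} (h : (s.filter (· ≠ 0)).card ≤ 1) :
    s = replicate (card s) 0 ∨ ∃ z ≠ 0, s = z ::ₘ replicate (card s - 1) 0 := by
  rcases Nat.le_one_iff_eq_zero_or_eq_one.1 h with h0 | h1
  · refine Or.inl (eq_replicate_of_mem fun b hb => ?_)
    by_contra hb0
    exact filter_eq_nil.1 (card_eq_zero.1 h0) b hb hb0
  · obtain ⟨z, hz⟩ := card_eq_one.1 h1
    have hz0 : z ≠ 0 :=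
      (mem_filter.1 (show z ∈ s.filter (· ≠ 0) by rw [hz]; exact mem_singleton_self z)).2
    have hzero : s.filter (¬ · ≠ 0) = replicate (card s - 1) 0 := by
      refine eq_replicate.2 ⟨?_, fun b hb => not_not.1 (mem_filter.1 hb).2⟩
      have := congrArg card (filter_add_not (· ≠ 0) s)
      rw [card_add, h1] at this
      omega
    refine Or.inr ⟨z, hz0, ?_⟩
    conv_lhs => rw [← filter_add_not (· ≠ 0) s, hz, hzero, singleton_add]

theorem Polynomial.eq_X_pow_or_of_re_sum_roots_pow_le_one {P : ℤ[X]} (hP : P.Monic)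
    (h : ∀ m, 1 ≤ m → ((P.map (Int.castRingHom ℂ)).roots.map (· ^ m)).sum.re ≤ 1) :
    P = X ^ P.natDegree ∨ P = X ^ (P.natDegree - 1) * (X - 1) ∨
      P = X ^ (P.natDegree - 1) * (X + 1) := by
  set p := P.map (Int.castRingHom ℂ)
  have hle : ∀ z ∈ p.roots, ‖z‖ ≤ 1 := fun z hz => p.roots.norm_le_one_of_re_sum_pow_le_one h hz
  have hunit : ∀ z ∈ p.roots, z ≠ 0 → ‖z‖ = 1 :=
    fun z hz hz0 => norm_eq_one_of_mem_roots_map_intCast hP hle hz hz0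
  have hcard : Multiset.card p.roots = P.natDegree := by
    rw [splits_iff_card_roots.1 (IsAlgClosed.splits p), hP.natDegree_map]
  have hp : p = (p.roots.map (X - C ·)).prod :=
    (IsAlgClosed.splits p).eq_prod_roots_of_monic (hP.map _)
  have hinj := map_injective (Int.castRingHom ℂ) Int.cast_injective
  rcases Multiset.eq_replicate_zero_or_eq_cons_replicate_zero
    (p.roots.card_filter_ne_zero_le_one_of_re_sum_pow_le_one h hunit) with hroots | ⟨z, hz0, hroots⟩
  · left
    apply hinj
    rw [hroots, hcard] at hp
    simpa using hp
  · right
    rw [hroots, hcard] at hp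
    simp only [Multiset.map_cons, Multiset.map_replicate, Multiset.prod_cons,
      Multiset.prod_replicate, map_zero, sub_zero] at hp
    set k := P.natDegree - 1
    have hcoeff : (P.coeff k : ℂ) = -z := by
      have hk := coeff_mul_X_pow (X - C z) k 0
      rw [zero_add] at hk
      simpa [p, coeff_map, hk] using congrArg (coeff · k) hp
    have hnorm : ‖(P.coeff k : ℂ)‖ = 1 := by
      rw [hcoeff, norm_neg]
      exact hunit z (by rw [hroots]; exact Multiset.mem_cons_self _ _) hz0
    rw [Complex.norm_intCast] at hnorm
    rcases (abs_eq zero_le_one).1 (show |P.coeff k| = 1 by exact_mod_cast hnorm) with hc | hc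
    · right
      have hz : z = -1 := by rw [hc] at hcoeff; push_cast at hcoeff; linear_combination hcoeff
      apply hinj
      change p = _
      simp [hp, hz, mul_comm]
    · left
      have hz : z = 1 := by rw [hc] at hcoeff; push_cast at hcoeff; linear_combination hcoeff
      apply hinj
      change p = _
      simp [hp, hz, mul_comm]

theorem Matrix.charpoly_eq_of_trace_pow_le_one {n : Type*} [Fintype n] [DecidableEq n]
    (A : Matrix n n ℤ) (h : ∀ m, 1 ≤ m → (A ^ m).trace ≤ 1) :
    A.charpoly = X ^ Fintype.card n ∨ A.charpoly = X ^ (Fintype.card n - 1) * (X - 1) ∨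
      A.charpoly = X ^ (Fintype.card n - 1) * (X + 1) := by
  have hpow : ∀ m, 1 ≤ m → ((A.charpoly.map (Int.castRingHom ℂ)).roots.map (· ^ m)).sum.re ≤ 1 := by
    intro m hm
    rw [← A.charpoly_map, ← Matrix.trace_pow_eq_sum_roots_charpoly, ← Matrix.map_pow,
      ← AddMonoidHom.map_trace, eq_intCast, Complex.intCast_re]
    exact_mod_cast h m hm
  simpa [A.charpoly_natDegree_eq_dim] using
    eq_X_pow_or_of_re_sum_roots_pow_le_one A.charpoly_monic hpow

/-- If A is an n × n integer matrix with trace(A^m) ≤ 1 for every m ≥ 1, then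
exactly one of the following holds: (i) the characteristic polynomial of A is
Xⁿ (all eigenvalues 0); (ii) it is X^(n−1)·(X − 1) (eigenvalues 1, 0, …, 0);
(iii) it is X^(n−1)·(X + 1) (eigenvalues −1, 0, …, 0). -/
theorem stmt_8 (n : ℕ) (A : Matrix (Fin n) (Fin n) ℤ)
    (h : ∀ m : ℕ, 1 ≤ m → (A ^ m).trace ≤ 1) :
    (A.charpoly = X ^ n ∧
        A.charpoly ≠ X ^ (n - 1) * (X - 1) ∧
        A.charpoly ≠ X ^ (n - 1) * (X + 1)) ∨
      (A.charpoly ≠ X ^ n ∧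
        A.charpoly = X ^ (n - 1) * (X - 1) ∧
        A.charpoly ≠ X ^ (n - 1) * (X + 1)) ∨
      (A.charpoly ≠ X ^ n ∧
        A.charpoly ≠ X ^ (n - 1) * (X - 1) ∧
        A.charpoly = X ^ (n - 1) * (X + 1)) := by
  have hne : ∀ p q : ℤ[X], p.eval 1 ≠ q.eval 1 → p ≠ q := fun p q hpq hpq' => hpq (hpq' ▸ rfl)
  rcases Fintype.card_fin n ▸ A.charpoly_eq_of_trace_pow_le_one h with hc | hc | hc <;>
    rw [hc] <;> simp [hne]
end

section
/- Let 𝔻 = {z ∈ ℂ : |z| < 1} be the open unit disk and let f : 𝔻 → 𝔻 be holomorphic. Then exactly one of the following holds: (a) there exists an integer p ≥ 1 such that the iterate f^p is the identity map of 𝔻; (b) f has exactly one periodic point, which is a fixed point of f; (c) f has no periodic points. -/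
/-!
Conjugating by a disk automorphism that moves one fixed point to the origin, the equality case
of the Schwarz lemma shows that a holomorphic self-map of the disk with two distinct fixed points
is the identity. If two distinct points of the disk are periodic, of periods `m` and `n`, they are
both fixed by `f^[m * n]`, which is therefore the identity. Otherwise there is at most one periodic
point, and since `f` maps periodic points to periodic points, it is fixed.
-/

open Metric Set Function Complex ComplexConjugate

noncomputable def mobius (a z : ℂ) : ℂ := (z - a) / (1 - conj a * z)

section Mobius

variable {a z : ℂ}

lemma one_sub_conj_mul_ne_zero (ha : ‖a‖ < 1) (hz : ‖z‖ < 1) : 1 - conj a * z ≠ 0 := by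
  have hlt : ‖conj a * z‖ < 1 := by
    rw [norm_mul, RCLike.norm_conj]
    exact mul_lt_one_of_nonneg_of_lt_one_left (norm_nonneg a) ha hz.le
  intro h
  rw [← sub_eq_zero.mp h, norm_one] at hlt
  exact lt_irrefl _ hlt

lemma sq_norm_one_sub_conj_mul_sub_sq_norm_sub (a z : ℂ) :
    ‖1 - conj a * z‖ ^ 2 - ‖z - a‖ ^ 2 = (1 - ‖a‖ ^ 2) * (1 - ‖z‖ ^ 2) := by
  simp only [Complex.sq_norm]
  apply Complex.ofReal_injective
  push_cast
  simp only [← Complex.mul_conj, map_sub, map_mul, map_one, Complex.conj_conj]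
  ring

lemma norm_mobius_lt_one (ha : ‖a‖ < 1) (hz : ‖z‖ < 1) : ‖mobius a z‖ < 1 := by
  have hsq : ‖z - a‖ ^ 2 < ‖1 - conj a * z‖ ^ 2 := by
    have := sq_norm_one_sub_conj_mul_sub_sq_norm_sub a z
    have : 0 < (1 - ‖a‖ ^ 2) * (1 - ‖z‖ ^ 2) := by
      apply mul_pos <;> nlinarith [norm_nonneg a, norm_nonneg z]
    linarith
  rw [mobius, norm_div, div_lt_one (norm_pos_iff.mpr (one_sub_conj_mul_ne_zero ha hz))]
  exact lt_of_pow_lt_pow_left₀ 2 (norm_nonneg _) hsq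

lemma mapsTo_mobius (ha : ‖a‖ < 1) : MapsTo (mobius a) (ball 0 1) (ball 0 1) := fun _ hz =>
  mem_ball_zero_iff.mpr (norm_mobius_lt_one ha (mem_ball_zero_iff.mp hz))

lemma differentiableOn_mobius (ha : ‖a‖ < 1) : DifferentiableOn ℂ (mobius a) (ball 0 1) :=
  (differentiableOn_id.sub_const a).div (differentiableOn_const 1 |>.sub
    ((differentiableOn_const _).mul differentiableOn_id))
    fun _ hz => one_sub_conj_mul_ne_zero ha (mem_ball_zero_iff.mp hz)

lemma mobius_self (a : ℂ) : mobius a a = 0 := by simp [mobius]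

lemma mobius_neg_zero (a : ℂ) : mobius (-a) 0 = a := by simp [mobius]

lemma leftInvOn_mobius_neg (ha : ‖a‖ < 1) : LeftInvOn (mobius (-a)) (mobius a) (ball 0 1) := by
  intro z hz
  have hz' : ‖z‖ < 1 := mem_ball_zero_iff.mp hz
  have hd := one_sub_conj_mul_ne_zero ha hz'
  have hd' := one_sub_conj_mul_ne_zero (a := -a) (by rwa [norm_neg]) (norm_mobius_lt_one ha hz')
  have hda := one_sub_conj_mul_ne_zero ha ha
  simp only [mobius, map_neg] at hd' ⊢
  field_simp at hd' ⊢
  rw [div_eq_iff fun h0 => hd' (by rw [h0, zero_div])]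
  ring

end Mobius

theorem eqOn_id_of_mapsTo_ball_of_isFixedPt {g : ℂ → ℂ} {c w : ℂ} {R : ℝ}
    (hd : DifferentiableOn ℂ g (ball c R)) (hmaps : MapsTo g (ball c R) (ball c R))
    (hc : IsFixedPt g c) (hw : w ∈ ball c R) (hwc : w ≠ c) (hgw : IsFixedPt g w) :
    EqOn g id (ball c R) := by
  have hR : R ≠ 0 := (nonempty_ball.mp ⟨w, hw⟩).ne'
  have hslope : dslope g c w = 1 := by
    rw [dslope_of_ne _ hwc, slope_def_field, hgw.eq, hc.eq, div_self (sub_ne_zero.mpr hwc)]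
  have hmaps' : MapsTo g (ball c R) (closedBall (g c) R) := by
    rw [hc.eq]; exact hmaps.mono_right ball_subset_closedBall
  intro z hz
  rw [Complex.affine_of_mapsTo_ball_of_norm_dslope_eq_div hd hmaps' hw
    (by rw [hslope, norm_one, div_self hR]) hz, hslope, hc.eq]
  simp

theorem eqOn_id_of_isFixedPt_of_isFixedPt {g : ℂ → ℂ}
    (hd : DifferentiableOn ℂ g (ball 0 1)) (hmaps : MapsTo g (ball 0 1) (ball 0 1))
    {a b : ℂ} (ha : a ∈ ball 0 1) (hb : b ∈ ball 0 1) (hab : a ≠ b)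
    (hga : IsFixedPt g a) (hgb : IsFixedPt g b) : EqOn g id (ball 0 1) := by
  have ha₁ : ‖a‖ < 1 := mem_ball_zero_iff.mp ha
  have ha₁' : ‖-a‖ < 1 := by rwa [norm_neg]
  have hinv := leftInvOn_mobius_neg ha₁
  set h : ℂ → ℂ := mobius a ∘ g ∘ mobius (-a)
  have hmaps_h : MapsTo h (ball 0 1) (ball 0 1) :=
    (mapsTo_mobius ha₁).comp (hmaps.comp (mapsTo_mobius ha₁'))
  have hd_h : DifferentiableOn ℂ h (ball 0 1) :=
    (differentiableOn_mobius ha₁).comp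
      (hd.comp (differentiableOn_mobius ha₁') (mapsTo_mobius ha₁'))
      (hmaps.comp (mapsTo_mobius ha₁'))
  have hh : EqOn h id (ball 0 1) := by
    refine eqOn_id_of_mapsTo_ball_of_isFixedPt hd_h hmaps_h (c := 0) (w := mobius a b) ?_
      (mapsTo_mobius ha₁ hb) ?_ ?_
    · simp only [IsFixedPt, h, comp_apply, mobius_neg_zero, hga.eq, mobius_self]
    · rw [← mobius_self a]
      exact fun heq => hab (hinv.injOn ha hb heq.symm)
    · simp only [IsFixedPt, h, comp_apply, hinv hb, hgb.eq]
  intro z hz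
  refine hinv.injOn (hmaps hz) hz ?_
  simpa [h, hinv hz] using hh (mapsTo_mobius ha₁ hz)

theorem exists_iterate_eqOn_id_of_mem_periodicPts {f : ℂ → ℂ}
    (hd : DifferentiableOn ℂ f (ball 0 1)) (hmaps : MapsTo f (ball 0 1) (ball 0 1))
    {z w : ℂ} (hz : z ∈ ball 0 1) (hw : w ∈ ball 0 1) (hzw : z ≠ w)
    (hzp : z ∈ periodicPts f) (hwp : w ∈ periodicPts f) :
    ∃ p, 0 < p ∧ EqOn f^[p] id (ball 0 1) := by
  obtain ⟨m, hm, hzm⟩ := hzp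
  obtain ⟨n, hn, hwn⟩ := hwp
  exact ⟨m * n, Nat.mul_pos hm hn, eqOn_id_of_isFixedPt_of_isFixedPt (hd.iterate hmaps _)
    (hmaps.iterate _) hz hw hzw (hzm.mul_const n) (hwn.const_mul m)⟩

/-- Pick-type theorem on the unit disk: for a holomorphic self-map f of the
open unit disk 𝔻, exactly one of the following holds: (a) some iterate f^p
(p ≥ 1) is the identity of 𝔻; (b) f has exactly one periodic point, which is a
fixed point; (c) f has no periodic points. -/
theorem stmt_9 (f : ℂ → ℂ)
    (hMaps : Set.MapsTo f (Metric.ball (0 : ℂ) 1) (Metric.ball (0 : ℂ) 1))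
    (hHol : DifferentiableOn ℂ f (Metric.ball (0 : ℂ) 1)) :
    let D := Metric.ball (0 : ℂ) 1
    let Pa := ∃ p : ℕ, 1 ≤ p ∧ ∀ z ∈ D, f^[p] z = z
    let Pb := ∃ z₀ ∈ D, f z₀ = z₀ ∧
      ∀ z ∈ D, (∃ m : ℕ, 1 ≤ m ∧ f^[m] z = z) → z = z₀
    let Pc := ∀ z ∈ D, ¬ ∃ m : ℕ, 1 ≤ m ∧ f^[m] z = z
    (Pa ∧ ¬Pb ∧ ¬Pc) ∨ (¬Pa ∧ Pb ∧ ¬Pc) ∨ (¬Pa ∧ ¬Pb ∧ Pc) := by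
  intro D Pa Pb Pc
  have h0 : (0 : ℂ) ∈ D := mem_ball_self one_pos
  have hhalf : (1 / 2 : ℂ) ∈ D := by norm_num [D]
  by_cases hPa : Pa
  · obtain ⟨p, hp, hid⟩ := hPa
    have hper : ∀ z ∈ D, ∃ m, 1 ≤ m ∧ f^[m] z = z := fun z hz => ⟨p, hp, hid z hz⟩
    refine Or.inl ⟨⟨p, hp, hid⟩, ?_, fun hPc => hPc 0 h0 (hper 0 h0)⟩
    rintro ⟨z₀, -, -, huniq⟩
    have : (1 / 2 : ℂ) ≠ 0 := by norm_num
    exact this ((huniq _ hhalf (hper _ hhalf)).trans (huniq 0 h0 (hper 0 h0)).symm)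
  by_cases hPc : Pc
  · exact Or.inr (Or.inr ⟨hPa, fun ⟨z₀, hz₀, hfz₀, _⟩ => hPc z₀ hz₀ ⟨1, le_rfl, hfz₀⟩, hPc⟩)
  obtain ⟨z, hz, hzp⟩ : ∃ z ∈ D, z ∈ periodicPts f := by
    by_contra hnone
    exact hPc fun z hz hper => hnone ⟨z, hz, hper⟩
  have huniq : ∀ w ∈ D, w ∈ periodicPts f → w = z := fun w hw hwp =>
    by_contra fun hwz => hPa (exists_iterate_eqOn_id_of_mem_periodicPts hHol hMaps hw hz hwz hwp hzp)
  obtain ⟨m, hm, hzm⟩ := hzp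
  exact Or.inr (Or.inl ⟨hPa, ⟨z, hz, huniq _ (hMaps hz) ⟨m, hm, hzm.apply⟩,
    fun w hw hwp => huniq w hw hwp⟩, hPc⟩)
end
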